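/- arXiv:1211.1498 — 3 statements merged into one kernel-verified Lean document; each statement's English description precedes it below -/
import Mathlib

section
/- For every K > 0 there exist constants 0 < c ≤ C depending only on K such that for every real p with 1 ≤ p < ∞, every strictly increasing sequence λ : ℤ → ℝ with λ_n → ±∞ as n → ±∞ and λ_{n+1} − λ_n ≤ K for all n, and every f : ℤ → ℂ, the trace norm ‖f‖_{W^2_p|Λ} satisfies c·N(f) ≤ ‖f‖_{W^2_p|Λ} ≤ C·N(f), where N(f)^p := ∑_{n∈ℤ} (λ_{n+2} − λ_n)|f[λ_n,λ_{n+1},λ_{n+2}]|^p + ∑_{n∈ℤ} (λ_{n+2} − λ_n)|f_n|^p + ∑_{n∈ℤ} (λ_{n+2} − λ_n)^{p+1}|f[λ_n,λ_{n+1}]|^p, both sides interpreted in [0,∞]. -/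
open MeasureTheory
open scoped ENNReal NNReal

/-- `lam` is a strictly increasing sequence tending to `-∞` at `-∞` and `+∞` at `+∞`. -/
def GoodSeq (lam : ℤ → ℝ) : Prop :=
  StrictMono lam ∧ Filter.Tendsto lam Filter.atBot Filter.atBot ∧
    Filter.Tendsto lam Filter.atTop Filter.atTop

/-- `F` is an admissible `r`-extension of `f : ℤ → ℂ`, with associated `r`-th derivative `G`:
`F` is `(r-1)` times continuously differentiable, `G` is locally integrable,
`F^{(r-1)}(b) - F^{(r-1)}(a) = ∫_a^b G` for all `a ≤ b`, and `F (lam n) = f n` for all `n`. -/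
def AdmissibleExt (r : ℕ) (lam : ℤ → ℝ) (f : ℤ → ℂ) (F G : ℝ → ℂ) : Prop :=
  ContDiff ℝ (r - 1 : ℕ) F ∧ MeasureTheory.LocallyIntegrable G volume ∧
  (∀ a b : ℝ, a ≤ b →
      iteratedDeriv (r - 1) F b - iteratedDeriv (r - 1) F a = ∫ t in a..b, G t) ∧
  (∀ n : ℤ, F (lam n) = f n)

/-- Homogeneous trace seminorm `‖f‖_{L^r_p|Λ}`, valued in `[0,∞]`. -/
noncomputable def traceL (r : ℕ) (p : ℝ) (lam : ℤ → ℝ) (f : ℤ → ℂ) : ℝ≥0∞ :=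
  ⨅ (F : ℝ → ℂ) (G : ℝ → ℂ) (_ : AdmissibleExt r lam f F G),
    (∫⁻ t, ENNReal.ofReal (‖G t‖ ^ p)) ^ (1 / p)

/-- Trace norm `‖f‖_{W^r_p|Λ}`, valued in `[0,∞]`. -/
noncomputable def traceW (r : ℕ) (p : ℝ) (lam : ℤ → ℝ) (f : ℤ → ℂ) : ℝ≥0∞ :=
  ⨅ (F : ℝ → ℂ) (G : ℝ → ℂ) (_ : AdmissibleExt r lam f F G),
    ((∫⁻ t, ENNReal.ofReal (‖F t‖ ^ p)) +
      (∫⁻ t, ENNReal.ofReal (‖G t‖ ^ p))) ^ (1 / p)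

/-- First order divided difference `f[λ_n, λ_{n+1}]`. -/
noncomputable def dd1 (lam : ℤ → ℝ) (f : ℤ → ℂ) (n : ℤ) : ℂ :=
  (f (n + 1) - f n) / ((lam (n + 1) - lam n : ℝ) : ℂ)

/-- Second order divided difference `f[λ_n, λ_{n+1}, λ_{n+2}]`. -/
noncomputable def dd2 (lam : ℤ → ℝ) (f : ℤ → ℂ) (n : ℤ) : ℂ :=
  (dd1 lam f (n + 1) - dd1 lam f n) / ((lam (n + 2) - lam n : ℝ) : ℂ)

/-- Divided difference `f[λ_n, …, λ_{n+k}]` of order `k`. -/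
noncomputable def ddiv (lam : ℤ → ℝ) (f : ℤ → ℂ) (n : ℤ) (k : ℕ) : ℂ :=
  ∑ i ∈ Finset.range (k + 1),
    f (n + (i : ℤ)) /
      ∏ j ∈ (Finset.range (k + 1)).erase i,
        ((lam (n + (i : ℤ)) - lam (n + (j : ℤ)) : ℝ) : ℂ)

/-- Divided difference of values `v` at (distinct) points `x`. -/
noncomputable def ddPts {m : ℕ} (x : Fin m → ℝ) (v : Fin m → ℂ) : ℂ :=
  ∑ i, v i / ∏ j ∈ Finset.univ.erase i, ((x i - x j : ℝ) : ℂ)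

/-- `F` is of class `W^r` on `[a,b]` with `r`-th derivative `G`. -/
def ClassW (r : ℕ) (a b : ℝ) (F G : ℝ → ℂ) : Prop :=
  ContDiffOn ℝ (r - 1 : ℕ) F (Set.Icc a b) ∧ MeasureTheory.IntegrableOn G (Set.Icc a b) ∧
  ∀ x y : ℝ, a ≤ x → x ≤ y → y ≤ b →
    iteratedDerivWithin (r - 1) F (Set.Icc a b) y -
      iteratedDerivWithin (r - 1) F (Set.Icc a b) x = ∫ t in x..y, G t

/-- `‖f‖_{eq,L}^p`, valued in `[0,∞]`. -/
noncomputable def eqLp (r : ℕ) (p : ℝ) (lam : ℤ → ℝ) (f : ℤ → ℂ) : ℝ≥0∞ :=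
  ∑' n : ℤ, ENNReal.ofReal ((lam (n + (r : ℤ)) - lam n) * ‖ddiv lam f n r‖ ^ p)

/-- `‖f‖_{eq,W}^p`, valued in `[0,∞]`. -/
noncomputable def eqWp (r : ℕ) (p : ℝ) (lam : ℤ → ℝ) (f : ℤ → ℂ) : ℝ≥0∞ :=
  eqLp r p lam f +
    ∑ j ∈ Finset.range r, ∑' n : ℤ,
      ENNReal.ofReal ((lam (n + (r : ℤ)) - lam n) ^ ((j : ℝ) * p + 1) *
        ‖ddiv lam f n j‖ ^ p)

/-- The cubic `q(x) = 4(x² - x³)`. -/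
noncomputable def qcub : ℝ → ℝ := fun x => 4 * (x ^ 2 - x ^ 3)

/-- `α_n(f) = (h_n f[λ_{n-1},λ_n] + h_{n-1} f[λ_n,λ_{n+1}])/(h_{n-1}+h_n)`. -/
noncomputable def alphaN (lam : ℤ → ℝ) (f : ℤ → ℂ) (n : ℤ) : ℂ :=
  (((lam (n + 1) - lam n : ℝ) : ℂ) * dd1 lam f (n - 1) +
      ((lam n - lam (n - 1) : ℝ) : ℂ) * dd1 lam f n) /
    ((lam (n + 1) - lam (n - 1) : ℝ) : ℂ)

/-- The formula for `Φ₁ f` on `[λ_n, λ_{n+1}]`. -/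
noncomputable def phi1P (lam : ℤ → ℝ) (f : ℤ → ℂ) (n : ℤ) (x : ℝ) : ℂ :=
  f n * (((lam (n + 1) - x) / (lam (n + 1) - lam n) : ℝ) : ℂ) +
    f (n + 1) * (((x - lam n) / (lam (n + 1) - lam n) : ℝ) : ℂ)

/-- The formula for `Φ₂ f` on `[μ_{n-1}, λ_n]`. -/
noncomputable def phi2L (lam : ℤ → ℝ) (f : ℤ → ℂ) (n : ℤ) (x : ℝ) : ℂ :=
  f n + alphaN lam f n * ((x - lam n : ℝ) : ℂ) +
    (((lam n - lam (n - 1)) ^ 2 : ℝ) : ℂ) * dd2 lam f (n - 1) *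
      ((qcub ((lam n - x) / (lam n - lam (n - 1))) : ℝ) : ℂ)

/-- The formula for `Φ₂ f` on `[λ_n, μ_n]`. -/
noncomputable def phi2R (lam : ℤ → ℝ) (f : ℤ → ℂ) (n : ℤ) (x : ℝ) : ℂ :=
  f n + alphaN lam f n * ((x - lam n : ℝ) : ℂ) +
    (((lam (n + 1) - lam n) ^ 2 : ℝ) : ℂ) * dd2 lam f (n - 1) *
      ((qcub ((x - lam n) / (lam (n + 1) - lam n)) : ℝ) : ℂ)

/-!
Lower bound. Let `F` be an admissible extension with `F'' = G`, and fix an interval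
`[λ_n, λ_{n+2}]` of length `H ≤ 2K`. Comparing divided differences with `F'` via Taylor's formula
gives `H |f[λ_n,λ_{n+1},λ_{n+2}]| ≤ 2 ∫ |G|`, and averaging `F` against affine weights with
vanishing first moment bounds `|F|` at the endpoints, hence `|f_n|` and `H |f[λ_n,λ_{n+1}]|`.
Each of the three quantities `x` thus satisfies `H x ≤ C_K ∫ (|F| + |G|)`; Jensen's inequality
turns this into `H xᵖ ≤ C_Kᵖ ∫ (|F| + |G|)ᵖ`, and summing over `n` counts every point twice.

Upper bound. The cubic Hermite spline with values `f_n` and slopes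
`α_n = (h_n f[λ_{n-1},λ_n] + h_{n-1} f[λ_n,λ_{n+1}]) / (h_{n-1} + h_n)` at the knots is `C¹`, with
piecewise linear second derivative. On `[λ_n, λ_{n+1}]` the spline and its second derivative are
bounded by
`|f_n| + h_n |f[λ_n,λ_{n+1}]| + C_K (|f[λ_{n-1},λ_n,λ_{n+1}]| + |f[λ_n,λ_{n+1},λ_{n+2}]|)`,
and integrating these bounds over the partition gives the estimate.
-/

open Set Filter Topology intervalIntegral

theorem rpow_lintegral_le_measure_univ_rpow_mul {α : Type*} [MeasurableSpace α] {μ : Measure α}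
    {g : α → ℝ≥0∞} (hg : AEMeasurable g μ) {p : ℝ} (hp : 1 ≤ p) :
    (∫⁻ t, g t ∂μ) ^ p ≤ μ univ ^ (p - 1) * ∫⁻ t, g t ^ p ∂μ := by
  rcases hp.eq_or_lt with rfl | hp
  · simp
  have hp₀ : 0 < p := by linarith
  have hpq : p.HolderConjugate (p / (p - 1)) := .conjExponent hp
  have holder := ENNReal.lintegral_mul_le_Lp_mul_Lq μ hpq hg aemeasurable_const (g := 1)
  simp only [Pi.one_apply, mul_one, ENNReal.one_rpow, lintegral_const, one_mul] at holder
  calc (∫⁻ t, g t ∂μ) ^ p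
      ≤ ((∫⁻ t, g t ^ p ∂μ) ^ (1 / p) * μ univ ^ (1 / (p / (p - 1)))) ^ p := by gcongr
    _ = μ univ ^ (p - 1) * ∫⁻ t, g t ^ p ∂μ := by
      rw [ENNReal.mul_rpow_of_nonneg _ _ hp₀.le, ← ENNReal.rpow_mul, ← ENNReal.rpow_mul,
        one_div_mul_cancel hp₀.ne', ENNReal.rpow_one, mul_comm]
      congr 2
      field_simp

theorem ofReal_mul_rpow_le_of_mul_le_integral {u : ℝ → ℝ} {a b x β p : ℝ} (hp : 1 ≤ p)
    (hab : a < b) (hx : 0 ≤ x) (hβ : 0 ≤ β) (hu : ∀ t, 0 ≤ u t) (hui : IntegrableOn u (Icc a b))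
    (h : (b - a) * x ≤ β * ∫ t in a..b, u t) :
    ENNReal.ofReal ((b - a) * x ^ p) ≤
      ENNReal.ofReal (β ^ p) * ∫⁻ t in Icc a b, ENNReal.ofReal (u t ^ p) := by
  have hp₀ : 0 < p := by linarith
  set L := ENNReal.ofReal (b - a)
  have hL0 : L ≠ 0 := by simp [L, hab]
  have hLt : L ≠ ⊤ := ENNReal.ofReal_ne_top
  have hint : ENNReal.ofReal (∫ t in a..b, u t) = ∫⁻ t in Icc a b, ENNReal.ofReal (u t) := by
    rw [integral_of_le hab.le, ← integral_Icc_eq_integral_Ioc,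
      ofReal_integral_eq_lintegral_ofReal hui (.of_forall hu)]
  have hjensen := rpow_lintegral_le_measure_univ_rpow_mul
    (μ := volume.restrict (Icc a b)) hui.aemeasurable.ennreal_ofReal hp
  rw [Measure.restrict_apply_univ, Real.volume_Icc] at hjensen
  have key : L ^ (p - 1) * (L * ENNReal.ofReal x ^ p) ≤
      L ^ (p - 1) * (ENNReal.ofReal β ^ p * ∫⁻ t in Icc a b, ENNReal.ofReal (u t) ^ p) := by
    calc L ^ (p - 1) * (L * ENNReal.ofReal x ^ p) = ENNReal.ofReal ((b - a) * x) ^ p := by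
          rw [ENNReal.ofReal_mul (by linarith), ENNReal.mul_rpow_of_nonneg _ _ hp₀.le,
            ← mul_assoc]
          congr 1
          conv_rhs => rw [← sub_add_cancel p 1,
            ENNReal.rpow_add_of_nonneg _ _ (by linarith) zero_le_one, ENNReal.rpow_one]
      _ ≤ (ENNReal.ofReal β * ∫⁻ t in Icc a b, ENNReal.ofReal (u t)) ^ p := by
          rw [← hint, ← ENNReal.ofReal_mul hβ]; gcongr
      _ ≤ L ^ (p - 1) * (ENNReal.ofReal β ^ p * ∫⁻ t in Icc a b, ENNReal.ofReal (u t) ^ p) := by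
          rw [ENNReal.mul_rpow_of_nonneg _ _ hp₀.le, mul_left_comm]
          gcongr
  rw [ENNReal.mul_le_mul_iff_right (ENNReal.rpow_pos (pos_iff_ne_zero.2 hL0) hLt).ne'
    (ENNReal.rpow_ne_top_of_nonneg (by linarith) hLt)] at key
  rw [ENNReal.ofReal_mul (by linarith), ← ENNReal.ofReal_rpow_of_nonneg hx hp₀.le,
    ← ENNReal.ofReal_rpow_of_nonneg hβ hp₀.le]
  simpa only [ENNReal.ofReal_rpow_of_nonneg (hu _) hp₀.le] using key

theorem lintegral_ofReal_add_rpow_le {α : Type*} [MeasurableSpace α] {μ : Measure α}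
    {u v : α → ℝ} (hu : AEMeasurable u μ) (hu₀ : ∀ t, 0 ≤ u t) (hv₀ : ∀ t, 0 ≤ v t) {p : ℝ}
    (hp : 1 ≤ p) :
    ∫⁻ t, ENNReal.ofReal ((u t + v t) ^ p) ∂μ ≤
      2 ^ (p - 1) * ((∫⁻ t, ENNReal.ofReal (u t ^ p) ∂μ) + ∫⁻ t, ENNReal.ofReal (v t ^ p) ∂μ) := by
  have hp₀ : 0 ≤ p := by linarith
  simp_rw [← ENNReal.ofReal_rpow_of_nonneg (hu₀ _) hp₀, ← ENNReal.ofReal_rpow_of_nonneg (hv₀ _) hp₀,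
    ← ENNReal.ofReal_rpow_of_nonneg (add_nonneg (hu₀ _) (hv₀ _)) hp₀,
    ENNReal.ofReal_add (hu₀ _) (hv₀ _)]
  rw [← lintegral_add_left' (hu.ennreal_ofReal.pow_const p),
    ← lintegral_const_mul' _ _ (ENNReal.rpow_ne_top_of_nonneg (by linarith) ENNReal.ofNat_ne_top)]
  exact lintegral_mono fun t => ENNReal.rpow_add_le_mul_rpow_add_rpow _ _ hp

theorem rpow_one_div_le_ofReal_mul {a b : ℝ≥0∞} {M p : ℝ} (hM : 0 ≤ M) (hp : 0 < p)
    (h : a ≤ ENNReal.ofReal (M ^ p) * b) : a ^ (1 / p) ≤ ENNReal.ofReal M * b ^ (1 / p) := by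
  rw [← ENNReal.ofReal_rpow_of_nonneg hM hp.le] at h
  calc a ^ (1 / p) ≤ (ENNReal.ofReal M ^ p * b) ^ (1 / p) := by gcongr
    _ = ENNReal.ofReal M * b ^ (1 / p) := by
      rw [ENNReal.mul_rpow_of_nonneg _ _ (by positivity), ← ENNReal.rpow_mul,
        mul_one_div_cancel hp.ne', ENNReal.rpow_one]

theorem three_mul_ofReal_rpow_mul_le {β p : ℝ} (hβ : 0 ≤ β) (hp : 1 ≤ p) :
    3 * ENNReal.ofReal (β ^ p) * (2 * 2 ^ (p - 1)) ≤ ENNReal.ofReal ((6 * β) ^ p) := by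
  have h₂ : (2 : ℝ≥0∞) * 2 ^ (p - 1) = ENNReal.ofReal (2 ^ p) := by
    rw [← ENNReal.ofReal_ofNat 2, ENNReal.ofReal_rpow_of_pos two_pos,
      ← ENNReal.ofReal_mul zero_le_two, ← Real.rpow_one_add' zero_le_two (by linarith),
      add_sub_cancel]
  have h₃ : (3 : ℝ) ≤ 3 ^ p := Real.self_le_rpow_of_one_le (by norm_num) hp
  rw [h₂, ← ENNReal.ofReal_ofNat 3, ← ENNReal.ofReal_mul (by norm_num),
    ← ENNReal.ofReal_mul (by positivity), show 6 * β = 3 * (2 * β) by ring,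
    Real.mul_rpow (x := 3) (by norm_num) (by positivity), Real.mul_rpow (x := 2) zero_le_two hβ]
  refine ENNReal.ofReal_le_ofReal ?_
  nlinarith [mul_nonneg (Real.rpow_nonneg hβ p) (Real.rpow_nonneg zero_le_two p)]

theorem ofReal_four_rpow_mul_two_le {c p : ℝ} (hc : 0 ≤ c) :
    ENNReal.ofReal (4 ^ (p - 1) * c ^ p) * 2 ≤ ENNReal.ofReal ((4 * c) ^ p) := by
  have h₄ : (4 : ℝ) ^ p = 4 ^ (p - 1) * 4 := by
    rw [← Real.rpow_add_one (by norm_num), sub_add_cancel]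
  rw [← ENNReal.ofReal_ofNat 2, ← ENNReal.ofReal_mul (by positivity),
    Real.mul_rpow (by norm_num) hc, h₄]
  refine ENNReal.ofReal_le_ofReal ?_
  nlinarith [mul_nonneg (Real.rpow_nonneg (show (0 : ℝ) ≤ 4 by norm_num) (p - 1))
    (Real.rpow_nonneg hc p)]

theorem mul_rpow_add_le {p h H H' a b c A B : ℝ} (hp : 1 ≤ p) (hh : 0 ≤ h) (hH : h ≤ H)
    (hH' : h ≤ H') (ha : 0 ≤ a) (hb : 0 ≤ b) (hA : 0 ≤ A) (hB : 0 ≤ B) (hc : 1 ≤ c) :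
    h * (a + h * b + c * (A + B)) ^ p ≤
      4 ^ (p - 1) * c ^ p * (H' * A ^ p + H * B ^ p + H * a ^ p + H ^ (p + 1) * b ^ p) := by
  have hp₀ : 0 ≤ p := by linarith
  have hc₀ : 0 ≤ c := by linarith
  have hcp : 1 ≤ c ^ p := Real.one_le_rpow hc hp₀
  have hsum := Real.rpow_sum_le_const_mul_sum_rpow_of_nonneg (s := Finset.univ)
    (f := ![a, h * b, c * A, c * B]) hp (fun i _ => by fin_cases i <;> simp <;> positivity)
  simp only [Fin.sum_univ_four, Finset.card_univ, Fintype.card_fin, Matrix.cons_val] at hsum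
  norm_num at hsum
  rw [Real.mul_rpow hh hb, Real.mul_rpow hc₀ hA, Real.mul_rpow hc₀ hB] at hsum
  have hhb : h * (h ^ p * b ^ p) ≤ H ^ (p + 1) * b ^ p := by
    rw [← mul_assoc, ← Real.rpow_one_add' hh (by linarith), add_comm 1 p]
    gcongr
  have hH₀ : 0 ≤ H := hh.trans hH
  have hap := Real.rpow_nonneg ha p
  have hAp := Real.rpow_nonneg hA p
  have hBp := Real.rpow_nonneg hB p
  have t₁ : h * a ^ p ≤ c ^ p * (H * a ^ p) :=
    (mul_le_mul_of_nonneg_right hH hap).trans (le_mul_of_one_le_left (mul_nonneg hH₀ hap) hcp)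
  have t₂ : h * (h ^ p * b ^ p) ≤ c ^ p * (H ^ (p + 1) * b ^ p) :=
    hhb.trans (le_mul_of_one_le_left
      (mul_nonneg (Real.rpow_nonneg hH₀ _) (Real.rpow_nonneg hb p)) hcp)
  have t₃ : h * (c ^ p * A ^ p) ≤ c ^ p * (H' * A ^ p) := by
    rw [mul_left_comm]; gcongr
  have t₄ : h * (c ^ p * B ^ p) ≤ c ^ p * (H * B ^ p) := by
    rw [mul_left_comm]; gcongr
  calc h * (a + h * b + c * (A + B)) ^ p
      ≤ 4 ^ (p - 1) * (h * (a ^ p + h ^ p * b ^ p + c ^ p * A ^ p + c ^ p * B ^ p)) := by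
        rw [mul_add c A B, ← add_assoc, mul_left_comm]
        exact mul_le_mul_of_nonneg_left hsum hh
    _ ≤ _ := by
        rw [mul_assoc]
        gcongr 4 ^ (p - 1) * ?_
        linarith

theorem integral_affine (a b c₀ c₁ x₀ : ℝ) :
    ∫ u in a..b, (c₀ + c₁ * (u - x₀)) =
      c₀ * (b - a) + c₁ * (((b - x₀) ^ 2 - (a - x₀) ^ 2) / 2) := by
  have h₁ : ∫ u in a..b, (u - x₀) = ((b - x₀) ^ 2 - (a - x₀) ^ 2) / 2 := by
    rw [integral_comp_sub_right (fun v : ℝ => v) x₀, integral_id]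
  rw [intervalIntegral.integral_add intervalIntegrable_const
      (by apply Continuous.intervalIntegrable; fun_prop),
    intervalIntegral.integral_const, intervalIntegral.integral_const_mul, h₁, smul_eq_mul, mul_comm]

theorem integral_affine_mul_sub (a b c₀ c₁ x₀ : ℝ) :
    ∫ u in a..b, (c₀ + c₁ * (u - x₀)) * (u - x₀) =
      c₀ * (((b - x₀) ^ 2 - (a - x₀) ^ 2) / 2) + c₁ * (((b - x₀) ^ 3 - (a - x₀) ^ 3) / 3) := by
  have h₁ : ∫ u in a..b, (u - x₀) = ((b - x₀) ^ 2 - (a - x₀) ^ 2) / 2 := by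
    rw [integral_comp_sub_right (fun v : ℝ => v) x₀, integral_id]
  have h₂ : ∫ u in a..b, (u - x₀) ^ 2 = ((b - x₀) ^ 3 - (a - x₀) ^ 3) / 3 := by
    rw [integral_comp_sub_right (fun v : ℝ => v ^ 2) x₀, integral_pow]
    norm_num
  simp_rw [add_mul, mul_assoc, ← pow_two]
  rw [intervalIntegral.integral_add (by apply Continuous.intervalIntegrable; fun_prop)
      (by apply Continuous.intervalIntegrable; fun_prop),
    intervalIntegral.integral_const_mul, intervalIntegral.integral_const_mul, h₁, h₂]

theorem integral_weight_mul_eq {F : ℝ → ℂ} (hF : Continuous F) {a b x₀ : ℝ} {w : ℝ → ℝ}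
    (hw : Continuous w) (hw₀ : ∫ u in a..b, w u = b - a) (hw₁ : ∫ u in a..b, w u * (u - x₀) = 0)
    (c : ℂ) :
    ∫ u in a..b, (w u : ℂ) * F u =
      ((b - a : ℝ) : ℂ) * F x₀ +
        ∫ u in a..b, (w u : ℂ) * (F u - F x₀ - ((u - x₀ : ℝ) : ℂ) * c) := by
  have hpt : ∀ u, (w u : ℂ) * F u = (w u : ℂ) * F x₀ + ((w u * (u - x₀) : ℝ) : ℂ) * c +
      (w u : ℂ) * (F u - F x₀ - ((u - x₀ : ℝ) : ℂ) * c) := fun u => by push_cast; ring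
  have hint : ∀ {φ : ℝ → ℂ}, Continuous φ → IntervalIntegrable φ volume a b :=
    fun hφ => hφ.intervalIntegrable a b
  rw [funext hpt, intervalIntegral.integral_add (hint (by fun_prop)) (hint (by fun_prop)),
    intervalIntegral.integral_add (hint (by fun_prop)) (hint (by fun_prop)),
    intervalIntegral.integral_mul_const, intervalIntegral.integral_mul_const,
    intervalIntegral.integral_ofReal, intervalIntegral.integral_ofReal, hw₀, hw₁]
  simp [mul_comm]

theorem norm_integral_weight_mul_le {F : ℝ → ℂ} {a b B : ℝ} {w : ℝ → ℝ} (hab : a ≤ b)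
    (hw : Continuous w) (hF : Continuous F) (hwB : ∀ u ∈ Icc a b, |w u| ≤ B) :
    ‖∫ u in a..b, (w u : ℂ) * F u‖ ≤ B * ∫ t in a..b, ‖F t‖ := by
  rw [← intervalIntegral.integral_const_mul]
  refine (intervalIntegral.norm_integral_le_integral_norm hab).trans
    (integral_mono_on hab
      ((by fun_prop : Continuous fun u => ‖(w u : ℂ) * F u‖).intervalIntegrable a b)
      ((by fun_prop : Continuous fun u => B * ‖F u‖).intervalIntegrable a b) fun u hu => ?_)
  rw [norm_mul, Complex.norm_real, Real.norm_eq_abs]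
  exact mul_le_mul_of_nonneg_right (hwB u hu) (norm_nonneg _)

namespace GoodSeq

variable {lam : ℤ → ℝ}

theorem exists_mem_Ico (hg : GoodSeq lam) (x : ℝ) : ∃ n, x ∈ Ico (lam n) (lam (n + 1)) := by
  obtain ⟨m₀, hm₀⟩ := (hg.2.1.eventually (eventually_le_atBot x)).exists
  obtain ⟨m₁, hm₁⟩ := (hg.2.2.eventually (eventually_gt_atTop x)).exists
  have hbdd : ∀ k, lam k ≤ x → k ≤ m₁ := fun k hk => by
    by_contra! hlt
    linarith [hg.1 hlt]
  obtain ⟨n, hn, hmax⟩ := Int.exists_greatest_of_bdd ⟨m₁, hbdd⟩ ⟨m₀, hm₀⟩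
  exact ⟨n, hn, not_le.1 fun h => by linarith [hmax (n + 1) h]⟩

noncomputable def index (hg : GoodSeq lam) (x : ℝ) : ℤ := (hg.exists_mem_Ico x).choose

theorem index_spec (hg : GoodSeq lam) (x : ℝ) : x ∈ Ico (lam (hg.index x)) (lam (hg.index x + 1)) :=
  (hg.exists_mem_Ico x).choose_spec

theorem index_eq (hg : GoodSeq lam) {n : ℤ} {x : ℝ} (hx : x ∈ Ico (lam n) (lam (n + 1))) :
    hg.index x = n := by
  obtain ⟨h₁, h₂⟩ := hg.index_spec x
  rcases lt_trichotomy (hg.index x) n with h | h | h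
  · linarith [hx.1, hg.1.monotone (show hg.index x + 1 ≤ n by omega)]
  · exact h
  · linarith [hx.2, hg.1.monotone (show n + 1 ≤ hg.index x by omega)]

theorem index_lam (hg : GoodSeq lam) (n : ℤ) : hg.index (lam n) = n :=
  hg.index_eq ⟨le_rfl, hg.1 (lt_add_one n)⟩

theorem monotone_index (hg : GoodSeq lam) : Monotone hg.index := fun x y hxy => by
  by_contra! h
  linarith [(hg.index_spec x).1, (hg.index_spec y).2,
    hg.1.monotone (show hg.index y + 1 ≤ hg.index x by omega)]

theorem exists_mem_Ioc (hg : GoodSeq lam) (x : ℝ) : ∃ n, x ∈ Ioc (lam n) (lam (n + 1)) := by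
  obtain ⟨h₁, h₂⟩ := hg.index_spec x
  rcases h₁.lt_or_eq with h | h
  · exact ⟨hg.index x, h, h₂.le⟩
  · exact ⟨hg.index x - 1, (hg.1 (sub_one_lt _)).trans_eq h, by rw [sub_add_cancel, h]⟩

theorem lintegral_eq_tsum_Ico (hg : GoodSeq lam) (φ : ℝ → ℝ≥0∞) :
    ∫⁻ t, φ t = ∑' n, ∫⁻ t in Ico (lam n) (lam (n + 1)), φ t := by
  have hcover : (⋃ n, Ico (lam n) (lam (n + 1))) = univ :=
    eq_univ_of_forall fun x => mem_iUnion.2 (hg.exists_mem_Ico x)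
  have hdisj := hg.1.monotone.pairwise_disjoint_on_Ico_succ
  simp only [Order.succ_eq_add_one] at hdisj
  rw [← lintegral_iUnion (fun n => measurableSet_Ico) hdisj, hcover, Measure.restrict_univ]

theorem tsum_lintegral_Icc_add_two (hg : GoodSeq lam) (φ : ℝ → ℝ≥0∞) :
    ∑' n, ∫⁻ t in Icc (lam n) (lam (n + 2)), φ t = 2 * ∫⁻ t, φ t := by
  set u : ℤ → ℝ≥0∞ := fun n => ∫⁻ t in Ico (lam n) (lam (n + 1)), φ t
  have hsplit : ∀ n, ∫⁻ t in Icc (lam n) (lam (n + 2)), φ t = u n + u (n + 1) := fun n => by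
    have h₁ := (hg.1 (lt_add_one n)).le
    have h₂ := (hg.1 (by omega : n + 1 < n + 2)).le
    rw [setLIntegral_congr Ico_ae_eq_Icc.symm, ← Ico_union_Ico_eq_Ico h₁ h₂,
      lintegral_union measurableSet_Ico Ico_disjoint_Ico_same]
    simp only [u, add_assoc, one_add_one_eq_two]
  have hshift : ∑' n, u (n + 1) = ∑' n, u n := (Equiv.addRight 1).tsum_eq u
  rw [tsum_congr hsplit, ENNReal.tsum_add, hshift, ← two_mul, hg.lintegral_eq_tsum_Ico]

noncomputable def glue {E : Type*} (hg : GoodSeq lam) (φ : ℤ → ℝ → E) (x : ℝ) : E :=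
  φ (hg.index x) x

variable {E : Type*}

theorem glue_eqOn_Ico (hg : GoodSeq lam) (φ : ℤ → ℝ → E) (n : ℤ) :
    EqOn (hg.glue φ) (φ n) (Ico (lam n) (lam (n + 1))) := fun x hx => by
  rw [glue, hg.index_eq hx]

theorem glue_eqOn_Icc (hg : GoodSeq lam) {φ : ℤ → ℝ → E}
    (hφ : ∀ n, φ n (lam (n + 1)) = φ (n + 1) (lam (n + 1))) (n : ℤ) :
    EqOn (hg.glue φ) (φ n) (Icc (lam n) (lam (n + 1))) := fun x hx => by
  rcases hx.2.lt_or_eq with h | rfl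
  · exact hg.glue_eqOn_Ico φ n ⟨hx.1, h⟩
  · rw [glue, hg.index_lam, hφ]

theorem exists_Icc_mem_nhdsLE (hg : GoodSeq lam) (x : ℝ) :
    ∃ n, x ∈ Icc (lam n) (lam (n + 1)) ∧ Icc (lam n) (lam (n + 1)) ∈ 𝓝[≤] x := by
  obtain ⟨n, hn₁, hn₂⟩ := hg.exists_mem_Ioc x
  exact ⟨n, ⟨hn₁.le, hn₂⟩, mem_of_superset (Icc_mem_nhdsLE hn₁) (Icc_subset_Icc_right hn₂)⟩

theorem Icc_index_mem_nhdsGE (hg : GoodSeq lam) (x : ℝ) :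
    Icc (lam (hg.index x)) (lam (hg.index x + 1)) ∈ 𝓝[≥] x :=
  mem_of_superset (Icc_mem_nhdsGE (hg.index_spec x).2)
    (Icc_subset_Icc_left (hg.index_spec x).1)

theorem continuous_glue [TopologicalSpace E] (hg : GoodSeq lam) {φ : ℤ → ℝ → E}
    (hφ : ∀ n, Continuous (φ n)) (hmatch : ∀ n, φ n (lam (n + 1)) = φ (n + 1) (lam (n + 1))) :
    Continuous (hg.glue φ) := by
  refine continuous_iff_continuousAt.2 fun x => continuousAt_iff_continuous_left_right.2 ⟨?_, ?_⟩
  · obtain ⟨n, hx, hmem⟩ := hg.exists_Icc_mem_nhdsLE x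
    exact (hφ n).continuousWithinAt.congr_of_eventuallyEq
      (eventually_of_mem hmem (hg.glue_eqOn_Icc hmatch n)) (hg.glue_eqOn_Icc hmatch n hx)
  · exact (hφ _).continuousWithinAt.congr_of_eventuallyEq
      (eventually_of_mem (hg.Icc_index_mem_nhdsGE x) (hg.glue_eqOn_Icc hmatch _))
      (hg.glue_eqOn_Icc hmatch _ (Ico_subset_Icc_self (hg.index_spec x)))

theorem locallyIntegrable_glue [NormedAddCommGroup E] (hg : GoodSeq lam) {φ : ℤ → ℝ → E}
    (hφ : ∀ n, Continuous (φ n)) :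
    LocallyIntegrable (hg.glue φ) volume := by
  refine locallyIntegrable_iff.2 fun k hk => ?_
  obtain ⟨r, hr⟩ := hk.isBounded.subset_closedBall 0
  rw [Real.closedBall_eq_Icc, zero_sub, zero_add] at hr
  have hcover : Icc (-r) r ⊆ ⋃ n ∈ Finset.Icc (hg.index (-r)) (hg.index r),
      Ico (lam n) (lam (n + 1)) := fun x hx =>
    mem_biUnion (Finset.mem_Icc.2 ⟨hg.monotone_index hx.1, hg.monotone_index hx.2⟩)
      (hg.index_spec x)
  refine IntegrableOn.mono_set ?_ (hr.trans hcover)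
  refine (integrableOn_finset_iUnion).2 fun n _ => ?_
  exact ((hφ n).integrableOn_Icc.mono_set Ico_subset_Icc_self).congr_fun
    (hg.glue_eqOn_Ico φ n).symm measurableSet_Ico

variable [NormedAddCommGroup E] [NormedSpace ℝ E]

theorem hasDerivAt_glue (hg : GoodSeq lam) {φ φ' : ℤ → ℝ → E}
    (hφ : ∀ n x, HasDerivAt (φ n) (φ' n x) x)
    (hmatch : ∀ n, φ n (lam (n + 1)) = φ (n + 1) (lam (n + 1)))
    (hmatch' : ∀ n, φ' n (lam (n + 1)) = φ' (n + 1) (lam (n + 1))) (x : ℝ) :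
    HasDerivAt (hg.glue φ) (hg.glue φ' x) x := by
  have hleft : HasDerivWithinAt (hg.glue φ) (hg.glue φ' x) (Iic x) x := by
    obtain ⟨n, hx, hmem⟩ := hg.exists_Icc_mem_nhdsLE x
    rw [hg.glue_eqOn_Icc hmatch' n hx]
    exact (hφ n x).hasDerivWithinAt.congr_of_eventuallyEq
      (eventually_of_mem hmem (hg.glue_eqOn_Icc hmatch n)) (hg.glue_eqOn_Icc hmatch n hx)
  have hright : HasDerivWithinAt (hg.glue φ) (hg.glue φ' x) (Ici x) x := by
    have hx := Ico_subset_Icc_self (hg.index_spec x)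
    rw [hg.glue_eqOn_Icc hmatch' _ hx]
    exact (hφ _ x).hasDerivWithinAt.congr_of_eventuallyEq
      (eventually_of_mem (hg.Icc_index_mem_nhdsGE x) (hg.glue_eqOn_Icc hmatch _))
      (hg.glue_eqOn_Icc hmatch _ hx)
  simpa [Iic_union_Ici] using hleft.union hright

theorem hasDerivWithinAt_Ioi_glue (hg : GoodSeq lam) {φ φ' : ℤ → ℝ → E}
    (hφ : ∀ n x, HasDerivAt (φ n) (φ' n x) x) (x : ℝ) :
    HasDerivWithinAt (hg.glue φ) (hg.glue φ' x) (Ioi x) x := by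
  have hmem : Ico (lam (hg.index x)) (lam (hg.index x + 1)) ∈ 𝓝[>] x :=
    mem_of_superset (Ioo_mem_nhdsGT (hg.index_spec x).2)
      (Ioo_subset_Ico_self.trans (Ico_subset_Ico_left (hg.index_spec x).1))
  exact (hφ _ x).hasDerivWithinAt.congr_of_eventuallyEq
    (eventually_of_mem hmem (hg.glue_eqOn_Ico φ _)) rfl

end GoodSeq

theorem admissibleExt_two_iff {lam : ℤ → ℝ} {f : ℤ → ℂ} {F G : ℝ → ℂ} :
    AdmissibleExt 2 lam f F G ↔ ContDiff ℝ 1 F ∧ LocallyIntegrable G volume ∧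
      (∀ a b : ℝ, a ≤ b → deriv F b - deriv F a = ∫ t in a..b, G t) ∧ ∀ n, F (lam n) = f n := by
  simp only [AdmissibleExt, Nat.add_one_sub_one, iteratedDeriv_one, Nat.cast_one]

/-- The `p`-th power of the discrete norm `N(f)`. -/
noncomputable def discreteNormRpow (p : ℝ) (lam : ℤ → ℝ) (f : ℤ → ℂ) : ℝ≥0∞ :=
  (∑' n : ℤ, ENNReal.ofReal ((lam (n + 2) - lam n) * ‖dd2 lam f n‖ ^ p)) +
    (∑' n : ℤ, ENNReal.ofReal ((lam (n + 2) - lam n) * ‖f n‖ ^ p)) +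
    ∑' n : ℤ, ENNReal.ofReal ((lam (n + 2) - lam n) ^ (p + 1) * ‖dd1 lam f n‖ ^ p)

/-- The `p`-th power of the `W²_p` norm of `F`, with `G` standing for `F''`. -/
noncomputable def sobolevNormRpow (p : ℝ) (F G : ℝ → ℂ) : ℝ≥0∞ :=
  (∫⁻ t, ENNReal.ofReal (‖F t‖ ^ p)) + ∫⁻ t, ENNReal.ofReal (‖G t‖ ^ p)

theorem sobolevNormRpow_le_lintegral {p : ℝ} (hp : 1 ≤ p) {F G : ℝ → ℂ} (hF : Continuous F) :
    sobolevNormRpow p F G ≤ ∫⁻ t, ENNReal.ofReal ((‖F t‖ + ‖G t‖) ^ p) := by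
  rw [sobolevNormRpow, ← lintegral_add_left (hF.norm.measurable.pow_const p).ennreal_ofReal]
  refine lintegral_mono fun t => ?_
  rw [← ENNReal.ofReal_add (by positivity) (by positivity)]
  exact ENNReal.ofReal_le_ofReal (Real.add_rpow_le_rpow_add (norm_nonneg _) (norm_nonneg _) hp)

section SecondDerivative

variable {F G : ℝ → ℂ}

theorem norm_deriv_sub_deriv_le
    (hFG : ∀ a b : ℝ, a ≤ b → deriv F b - deriv F a = ∫ t in a..b, G t)
    (hG : LocallyIntegrable G volume) {a b s m : ℝ} (hs : s ∈ Icc a b) (hm : m ∈ Icc a b) :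
    ‖deriv F s - deriv F m‖ ≤ ∫ t in a..b, ‖G t‖ := by
  have hGi : IntervalIntegrable (fun t => ‖G t‖) volume a b :=
    IntegrableOn.intervalIntegrable (hG.integrableOn_isCompact isCompact_uIcc).norm
  have key : ∀ u v, u ∈ Icc a b → v ∈ Icc a b → u ≤ v →
      ‖deriv F v - deriv F u‖ ≤ ∫ t in a..b, ‖G t‖ := fun u v hu hv huv => by
    rw [hFG u v huv]
    exact (intervalIntegral.norm_integral_le_integral_norm huv).trans
      (integral_mono_interval hu.1 huv hv.2 (.of_forall fun t => norm_nonneg _) hGi)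
  rcases le_total m s with h | h
  · exact key m s hm hs h
  · rw [norm_sub_rev]; exact key s m hs hm h

theorem norm_sub_sub_mul_deriv_le (hF : ContDiff ℝ 1 F)
    (hFG : ∀ a b : ℝ, a ≤ b → deriv F b - deriv F a = ∫ t in a..b, G t)
    (hG : LocallyIntegrable G volume) {a b x y m : ℝ}
    (hax : a ≤ x) (hxy : x ≤ y) (hyb : y ≤ b) (hm : m ∈ Icc a b) :
    ‖F y - F x - ((y - x : ℝ) : ℂ) * deriv F m‖ ≤ (y - x) * ∫ t in a..b, ‖G t‖ := by
  have hF' : Continuous (deriv F) := hF.continuous_deriv le_rfl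
  have hFTC : F y - F x = ∫ t in x..y, deriv F t :=
    (integral_deriv_eq_sub (fun u _ => (hF.differentiable one_ne_zero).differentiableAt)
      (hF'.intervalIntegrable x y)).symm
  have hconst : ((y - x : ℝ) : ℂ) * deriv F m = ∫ _ in x..y, deriv F m := by
    rw [intervalIntegral.integral_const, Complex.real_smul]
  rw [hFTC, hconst,
    ← intervalIntegral.integral_sub (hF'.intervalIntegrable x y) intervalIntegrable_const]
  have hbound := norm_integral_le_of_norm_le_const (a := x) (b := y)
    (C := ∫ t in a..b, ‖G t‖) (f := fun t => deriv F t - deriv F m) fun u hu => by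
      rw [uIoc_of_le hxy] at hu
      exact norm_deriv_sub_deriv_le hFG hG ⟨hax.trans hu.1.le, hu.2.trans hyb⟩ hm
  rwa [abs_of_nonneg (sub_nonneg.2 hxy), mul_comm] at hbound

theorem norm_slope_sub_deriv_le (hF : ContDiff ℝ 1 F)
    (hFG : ∀ a b : ℝ, a ≤ b → deriv F b - deriv F a = ∫ t in a..b, G t)
    (hG : LocallyIntegrable G volume) {a b x y m : ℝ}
    (hax : a ≤ x) (hxy : x < y) (hyb : y ≤ b) (hm : m ∈ Icc a b) :
    ‖(F y - F x) / ((y - x : ℝ) : ℂ) - deriv F m‖ ≤ ∫ t in a..b, ‖G t‖ := by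
  have hpos : 0 < y - x := sub_pos.2 hxy
  have hne : ((y - x : ℝ) : ℂ) ≠ 0 := Complex.ofReal_ne_zero.2 hpos.ne'
  rw [← mul_div_cancel_left₀ (deriv F m) hne, ← sub_div, norm_div, Complex.norm_real,
    Real.norm_of_nonneg hpos.le, div_le_iff₀ hpos, mul_comm _ (y - x)]
  exact norm_sub_sub_mul_deriv_le hF hFG hG hax hxy.le hyb hm

theorem norm_sub_sub_mul_deriv_self_le (hF : ContDiff ℝ 1 F)
    (hFG : ∀ a b : ℝ, a ≤ b → deriv F b - deriv F a = ∫ t in a..b, G t)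
    (hG : LocallyIntegrable G volume) {a b u x₀ : ℝ} (hu : u ∈ Icc a b) (hx₀ : x₀ ∈ Icc a b) :
    ‖F u - F x₀ - ((u - x₀ : ℝ) : ℂ) * deriv F x₀‖ ≤ (b - a) * ∫ t in a..b, ‖G t‖ := by
  have hGI : 0 ≤ ∫ t in a..b, ‖G t‖ :=
    intervalIntegral.integral_nonneg (hu.1.trans hu.2) fun t _ => norm_nonneg _
  rcases le_total x₀ u with h | h
  · refine (norm_sub_sub_mul_deriv_le hF hFG hG hx₀.1 h hu.2 hx₀).trans ?_
    exact mul_le_mul_of_nonneg_right (by linarith [hu.2, hx₀.1]) hGI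
  · have hrev : F u - F x₀ - ((u - x₀ : ℝ) : ℂ) * deriv F x₀ =
        -(F x₀ - F u - ((x₀ - u : ℝ) : ℂ) * deriv F x₀) := by push_cast; ring
    rw [hrev, norm_neg]
    refine (norm_sub_sub_mul_deriv_le hF hFG hG hu.1 h hx₀.2 hx₀).trans ?_
    exact mul_le_mul_of_nonneg_right (by linarith [hu.1, hx₀.2]) hGI

theorem mul_norm_le_of_weight (hF : ContDiff ℝ 1 F)
    (hFG : ∀ a b : ℝ, a ≤ b → deriv F b - deriv F a = ∫ t in a..b, G t)
    (hG : LocallyIntegrable G volume) {a b x₀ B : ℝ} {w : ℝ → ℝ} (hab : a < b)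
    (hx₀ : x₀ ∈ Icc a b) (hw : Continuous w) (hwB : ∀ u ∈ Icc a b, |w u| ≤ B)
    (hw₀ : ∫ u in a..b, w u = b - a) (hw₁ : ∫ u in a..b, w u * (u - x₀) = 0) :
    (b - a) * ‖F x₀‖ ≤ B * (∫ t in a..b, ‖F t‖) + B * (b - a) ^ 2 * ∫ t in a..b, ‖G t‖ := by
  have hB : 0 ≤ B := (abs_nonneg _).trans (hwB a (left_mem_Icc.2 hab.le))
  have hwF := norm_integral_weight_mul_le hab.le hw hF.continuous hwB
  have hwR : ‖∫ u in a..b, (w u : ℂ) * (F u - F x₀ - ((u - x₀ : ℝ) : ℂ) * deriv F x₀)‖ ≤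
      B * ((b - a) * ∫ t in a..b, ‖G t‖) * (b - a) := by
    have h := norm_integral_le_of_norm_le_const (a := a) (b := b)
      (f := fun u => (w u : ℂ) * (F u - F x₀ - ((u - x₀ : ℝ) : ℂ) * deriv F x₀))
      (C := B * ((b - a) * ∫ t in a..b, ‖G t‖)) fun u hu => by
        rw [uIoc_of_le hab.le] at hu
        have hu' : u ∈ Icc a b := ⟨hu.1.le, hu.2⟩
        rw [norm_mul, Complex.norm_real, Real.norm_eq_abs]
        exact mul_le_mul (hwB u hu') (norm_sub_sub_mul_deriv_self_le hF hFG hG hu' hx₀)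
          (norm_nonneg _) hB
    rwa [abs_of_pos (sub_pos.2 hab)] at h
  calc (b - a) * ‖F x₀‖ = ‖((b - a : ℝ) : ℂ) * F x₀‖ := by
        rw [norm_mul, Complex.norm_real, Real.norm_of_nonneg (sub_pos.2 hab).le]
    _ ≤ B * (∫ t in a..b, ‖F t‖) + B * ((b - a) * ∫ t in a..b, ‖G t‖) * (b - a) := by
        rw [eq_sub_of_add_eq (integral_weight_mul_eq hF.continuous hw hw₀ hw₁ (deriv F x₀)).symm]
        exact (norm_sub_le _ _).trans (add_le_add hwF hwR)
    _ = B * (∫ t in a..b, ‖F t‖) + B * (b - a) ^ 2 * ∫ t in a..b, ‖G t‖ := by ring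

theorem mul_norm_left_le (hF : ContDiff ℝ 1 F)
    (hFG : ∀ a b : ℝ, a ≤ b → deriv F b - deriv F a = ∫ t in a..b, G t)
    (hG : LocallyIntegrable G volume) {a b : ℝ} (hab : a < b) :
    (b - a) * ‖F a‖ ≤ 4 * (∫ t in a..b, ‖F t‖) + 4 * (b - a) ^ 2 * ∫ t in a..b, ‖G t‖ := by
  have hL : b - a ≠ 0 := (sub_pos.2 hab).ne'
  refine mul_norm_le_of_weight hF hFG hG hab (left_mem_Icc.2 hab.le)
    (w := fun u => 4 + (-6 / (b - a)) * (u - a)) (by fun_prop) (fun u hu => ?_) ?_ ?_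
  · have h₀ : 0 ≤ (u - a) / (b - a) := div_nonneg (by linarith [hu.1]) (by linarith)
    have h₁ : (u - a) / (b - a) ≤ 1 := (div_le_one (by linarith)).2 (by linarith [hu.2])
    rw [abs_le, show -6 / (b - a) * (u - a) = -6 * ((u - a) / (b - a)) by ring]
    constructor <;> linarith
  · rw [integral_affine]; field_simp; ring
  · rw [integral_affine_mul_sub]; field_simp; ring

theorem mul_norm_right_le (hF : ContDiff ℝ 1 F)
    (hFG : ∀ a b : ℝ, a ≤ b → deriv F b - deriv F a = ∫ t in a..b, G t)
    (hG : LocallyIntegrable G volume) {a b : ℝ} (hab : a < b) :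
    (b - a) * ‖F b‖ ≤ 4 * (∫ t in a..b, ‖F t‖) + 4 * (b - a) ^ 2 * ∫ t in a..b, ‖G t‖ := by
  have hL : b - a ≠ 0 := (sub_pos.2 hab).ne'
  refine mul_norm_le_of_weight hF hFG hG hab (right_mem_Icc.2 hab.le)
    (w := fun u => 4 + (6 / (b - a)) * (u - b)) (by fun_prop) (fun u hu => ?_) ?_ ?_
  · have h₀ : 0 ≤ (b - u) / (b - a) := div_nonneg (by linarith [hu.2]) (by linarith)
    have h₁ : (b - u) / (b - a) ≤ 1 := (div_le_one (by linarith)).2 (by linarith [hu.1])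
    rw [abs_le, show 6 / (b - a) * (u - b) = -6 * ((b - u) / (b - a)) by ring]
    constructor <;> linarith
  · rw [integral_affine]; field_simp; ring
  · rw [integral_affine_mul_sub]; field_simp; ring

end SecondDerivative

section LowerBound

variable {lam : ℤ → ℝ} {f : ℤ → ℂ} {F G : ℝ → ℂ}

theorem mul_norm_dd2_le (hs : StrictMono lam) (hF : ContDiff ℝ 1 F)
    (hFG : ∀ a b : ℝ, a ≤ b → deriv F b - deriv F a = ∫ t in a..b, G t)
    (hG : LocallyIntegrable G volume) (hFf : ∀ n, F (lam n) = f n) (n : ℤ) :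
    (lam (n + 2) - lam n) * ‖dd2 lam f n‖ ≤ 2 * ∫ t in lam n..lam (n + 2), ‖G t‖ := by
  have h₀ := hs (lt_add_one n)
  have h₁ := hs (show n + 1 < n + 2 by omega)
  have hH : 0 < lam (n + 2) - lam n := by linarith
  have hm : lam (n + 1) ∈ Icc (lam n) (lam (n + 2)) := ⟨h₀.le, h₁.le⟩
  have hleft : ‖dd1 lam f n - deriv F (lam (n + 1))‖ ≤ ∫ t in lam n..lam (n + 2), ‖G t‖ := by
    rw [dd1, ← hFf, ← hFf]
    exact norm_slope_sub_deriv_le hF hFG hG le_rfl h₀ h₁.le hm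
  have hright : ‖dd1 lam f (n + 1) - deriv F (lam (n + 1))‖ ≤
      ∫ t in lam n..lam (n + 2), ‖G t‖ := by
    rw [dd1, ← hFf, ← hFf, add_assoc, one_add_one_eq_two]
    exact norm_slope_sub_deriv_le hF hFG hG h₀.le h₁ le_rfl hm
  rw [dd2, norm_div, Complex.norm_real, Real.norm_of_nonneg hH.le, mul_div_cancel₀ _ hH.ne']
  calc ‖dd1 lam f (n + 1) - dd1 lam f n‖
      = ‖(dd1 lam f (n + 1) - deriv F (lam (n + 1))) - (dd1 lam f n - deriv F (lam (n + 1)))‖ := by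
        rw [sub_sub_sub_cancel_right]
    _ ≤ 2 * ∫ t in lam n..lam (n + 2), ‖G t‖ := by
        have := norm_sub_le (dd1 lam f (n + 1) - deriv F (lam (n + 1)))
          (dd1 lam f n - deriv F (lam (n + 1)))
        linarith

theorem sq_mul_norm_dd1_le (hs : StrictMono lam) (hF : ContDiff ℝ 1 F)
    (hFG : ∀ a b : ℝ, a ≤ b → deriv F b - deriv F a = ∫ t in a..b, G t)
    (hG : LocallyIntegrable G volume) (hFf : ∀ n, F (lam n) = f n) (n : ℤ) :
    (lam (n + 2) - lam n) ^ 2 * ‖dd1 lam f n‖ ≤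
      8 * (∫ t in lam n..lam (n + 2), ‖F t‖) +
        10 * (lam (n + 2) - lam n) ^ 2 * ∫ t in lam n..lam (n + 2), ‖G t‖ := by
  set a := lam n
  set b := lam (n + 2)
  set H := b - a
  set gI := ∫ t in a..b, ‖G t‖
  have h₀ := hs (lt_add_one n)
  have h₁ := hs (show n + 1 < n + 2 by omega)
  have hH : 0 < H := by simp only [H, a, b]; linarith
  have ha : a ∈ Icc a b := left_mem_Icc.2 (by linarith)
  have hslope : ‖dd1 lam f n - deriv F a‖ ≤ gI := by
    rw [dd1, ← hFf, ← hFf]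
    exact norm_slope_sub_deriv_le hF hFG hG le_rfl h₀ h₁.le ha
  set Q := (F b - F a) / ((H : ℝ) : ℂ)
  have hchord : ‖Q - deriv F a‖ ≤ gI :=
    norm_slope_sub_deriv_le hF hFG hG le_rfl (by linarith) le_rfl ha
  have hchord_norm : H * ‖Q‖ ≤ ‖F a‖ + ‖F b‖ := by
    rw [norm_div, Complex.norm_real, Real.norm_of_nonneg hH.le, mul_div_cancel₀ _ hH.ne']
    exact (norm_sub_le _ _).trans_eq (add_comm _ _)
  have htri : ‖dd1 lam f n‖ ≤ ‖dd1 lam f n - deriv F a‖ + ‖Q - deriv F a‖ + ‖Q‖ :=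
    calc ‖dd1 lam f n‖ = ‖(dd1 lam f n - deriv F a) - (Q - deriv F a) + Q‖ := by ring_nf
      _ ≤ ‖(dd1 lam f n - deriv F a) - (Q - deriv F a)‖ + ‖Q‖ := norm_add_le _ _
      _ ≤ _ := by gcongr; exact norm_sub_le _ _
  have hFa := mul_norm_left_le hF hFG hG (show a < b by linarith)
  have hFb := mul_norm_right_le hF hFG hG (show a < b by linarith)
  have hH_dd1 : H * ‖dd1 lam f n‖ ≤ ‖F a‖ + ‖F b‖ + 2 * H * gI := by
    nlinarith [mul_le_mul_of_nonneg_left htri hH.le, mul_le_mul_of_nonneg_left hslope hH.le,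
      mul_le_mul_of_nonneg_left hchord hH.le]
  nlinarith [mul_le_mul_of_nonneg_left hH_dd1 hH.le]

theorem mul_le_integral_norm_add_norm {K : ℝ} (hs : StrictMono lam)
    (hK : ∀ n, lam (n + 1) - lam n ≤ K) (hF : ContDiff ℝ 1 F)
    (hFG : ∀ a b : ℝ, a ≤ b → deriv F b - deriv F a = ∫ t in a..b, G t)
    (hG : LocallyIntegrable G volume) (hFf : ∀ n, F (lam n) = f n) (n : ℤ) :
    (lam (n + 2) - lam n) * ‖dd2 lam f n‖ ≤
        40 * (1 + K ^ 2) * ∫ t in lam n..lam (n + 2), (‖F t‖ + ‖G t‖) ∧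
      (lam (n + 2) - lam n) * ‖f n‖ ≤
        40 * (1 + K ^ 2) * ∫ t in lam n..lam (n + 2), (‖F t‖ + ‖G t‖) ∧
      (lam (n + 2) - lam n) * ((lam (n + 2) - lam n) * ‖dd1 lam f n‖) ≤
        40 * (1 + K ^ 2) * ∫ t in lam n..lam (n + 2), (‖F t‖ + ‖G t‖) := by
  have h₀ := hs (lt_add_one n)
  have h₁ := hs (show n + 1 < n + 2 by omega)
  have hdd2 := mul_norm_dd2_le hs hF hFG hG hFf n
  have hfn := mul_norm_left_le hF hFG hG (h₀.trans h₁)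
  have hdd1 := sq_mul_norm_dd1_le hs hF hFG hG hFf n
  have hHK : (lam (n + 2) - lam n) ^ 2 ≤ 4 * K ^ 2 := by
    have := hK (n + 1)
    rw [add_assoc, one_add_one_eq_two] at this
    nlinarith [hK n]
  rw [hFf] at hfn
  rw [intervalIntegral.integral_add (hF.continuous.norm.intervalIntegrable _ _)
    (IntegrableOn.intervalIntegrable (hG.integrableOn_isCompact isCompact_uIcc).norm)]
  have hfI : 0 ≤ ∫ t in lam n..lam (n + 2), ‖F t‖ :=
    intervalIntegral.integral_nonneg (h₀.trans h₁).le fun t _ => norm_nonneg _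
  have hgI : 0 ≤ ∫ t in lam n..lam (n + 2), ‖G t‖ :=
    intervalIntegral.integral_nonneg (h₀.trans h₁).le fun t _ => norm_nonneg _
  have hgK := mul_le_mul_of_nonneg_right hHK hgI
  exact ⟨by nlinarith, by nlinarith, by nlinarith⟩

theorem lower_summand_le {p K : ℝ} (hp : 1 ≤ p) (hs : StrictMono lam)
    (hK : ∀ n, lam (n + 1) - lam n ≤ K) (hF : ContDiff ℝ 1 F)
    (hFG : ∀ a b : ℝ, a ≤ b → deriv F b - deriv F a = ∫ t in a..b, G t)
    (hG : LocallyIntegrable G volume) (hFf : ∀ n, F (lam n) = f n) (n : ℤ) :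
    ENNReal.ofReal ((lam (n + 2) - lam n) * ‖dd2 lam f n‖ ^ p) +
        ENNReal.ofReal ((lam (n + 2) - lam n) * ‖f n‖ ^ p) +
        ENNReal.ofReal ((lam (n + 2) - lam n) ^ (p + 1) * ‖dd1 lam f n‖ ^ p) ≤
      3 * ENNReal.ofReal ((40 * (1 + K ^ 2)) ^ p) *
        ∫⁻ t in Icc (lam n) (lam (n + 2)), ENNReal.ofReal ((‖F t‖ + ‖G t‖) ^ p) := by
  have hab := hs (show n < n + 2 by omega)
  have hH : 0 < lam (n + 2) - lam n := sub_pos.2 hab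
  obtain ⟨e₁, e₂, e₃⟩ := mul_le_integral_norm_add_norm hs hK hF hFG hG hFf n
  have hint : IntegrableOn (fun t => ‖F t‖ + ‖G t‖) (Icc (lam n) (lam (n + 2))) :=
    hF.continuous.norm.integrableOn_Icc.add (hG.integrableOn_isCompact isCompact_Icc).norm
  have jensen := fun x (hx : 0 ≤ x) => ofReal_mul_rpow_le_of_mul_le_integral (x := x)
    (β := 40 * (1 + K ^ 2)) hp hab hx (by positivity) (fun t => by positivity) hint
  replace e₃ := jensen _ (by positivity) e₃
  rw [Real.mul_rpow hH.le (norm_nonneg _), ← mul_assoc, mul_comm (lam (n + 2) - lam n),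
    ← Real.rpow_add_one hH.ne'] at e₃
  calc _ ≤ _ := add_le_add (add_le_add (jensen _ (norm_nonneg _) e₁)
        (jensen _ (norm_nonneg _) e₂)) e₃
    _ = _ := by ring

theorem discreteNormRpow_le {p K : ℝ} (hp : 1 ≤ p) (hg : GoodSeq lam)
    (hK : ∀ n, lam (n + 1) - lam n ≤ K) (hF : ContDiff ℝ 1 F)
    (hFG : ∀ a b : ℝ, a ≤ b → deriv F b - deriv F a = ∫ t in a..b, G t)
    (hG : LocallyIntegrable G volume) (hFf : ∀ n, F (lam n) = f n) :
    discreteNormRpow p lam f ≤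
      ENNReal.ofReal ((240 * (1 + K ^ 2)) ^ p) * sobolevNormRpow p F G := by
  calc discreteNormRpow p lam f
      = ∑' n, (ENNReal.ofReal ((lam (n + 2) - lam n) * ‖dd2 lam f n‖ ^ p) +
          ENNReal.ofReal ((lam (n + 2) - lam n) * ‖f n‖ ^ p) +
          ENNReal.ofReal ((lam (n + 2) - lam n) ^ (p + 1) * ‖dd1 lam f n‖ ^ p)) := by
        rw [discreteNormRpow, ENNReal.tsum_add, ENNReal.tsum_add]
    _ ≤ ∑' n, 3 * ENNReal.ofReal ((40 * (1 + K ^ 2)) ^ p) *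
          ∫⁻ t in Icc (lam n) (lam (n + 2)), ENNReal.ofReal ((‖F t‖ + ‖G t‖) ^ p) :=
        ENNReal.tsum_le_tsum fun n => lower_summand_le hp hg.1 hK hF hFG hG hFf n
    _ = 3 * ENNReal.ofReal ((40 * (1 + K ^ 2)) ^ p) *
          (2 * ∫⁻ t, ENNReal.ofReal ((‖F t‖ + ‖G t‖) ^ p)) := by
        rw [ENNReal.tsum_mul_left, hg.tsum_lintegral_Icc_add_two]
    _ ≤ 3 * ENNReal.ofReal ((40 * (1 + K ^ 2)) ^ p) *
          (2 * (2 ^ (p - 1) * sobolevNormRpow p F G)) := by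
        gcongr
        exact lintegral_ofReal_add_rpow_le hF.continuous.norm.aemeasurable
          (fun _ => norm_nonneg _) (fun _ => norm_nonneg _) hp
    _ ≤ ENNReal.ofReal ((240 * (1 + K ^ 2)) ^ p) * sobolevNormRpow p F G := by
        rw [← mul_assoc 2, ← mul_assoc, show 240 * (1 + K ^ 2) = 6 * (40 * (1 + K ^ 2)) by ring]
        gcongr
        exact three_mul_ofReal_rpow_mul_le (by positivity) hp

end LowerBound

noncomputable def cubic (c₀ c₁ c₂ c₃ : ℂ) (x₀ x : ℝ) : ℂ :=
  c₀ + c₁ * ((x - x₀ : ℝ) : ℂ) + c₂ * ((x - x₀ : ℝ) : ℂ) ^ 2 + c₃ * ((x - x₀ : ℝ) : ℂ) ^ 3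

section Cubic

variable (c₀ c₁ c₂ c₃ : ℂ) (x₀ : ℝ)

@[simp]
theorem cubic_self : cubic c₀ c₁ c₂ c₃ x₀ x₀ = c₀ := by simp [cubic]

theorem hasDerivAt_cubic (x : ℝ) :
    HasDerivAt (cubic c₀ c₁ c₂ c₃ x₀) (cubic c₁ (2 * c₂) (3 * c₃) 0 x₀ x) x := by
  have hd : HasDerivAt (fun y : ℝ => ((y - x₀ : ℝ) : ℂ)) 1 x := by
    simpa using ((hasDerivAt_id x).sub_const x₀).ofReal_comp
  refine ((((hd.const_mul c₁).const_add c₀).add ((hd.pow 2).const_mul c₂)).add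
    ((hd.pow 3).const_mul c₃)).congr_deriv ?_
  simp only [cubic]; push_cast; ring

theorem continuous_cubic : Continuous (cubic c₀ c₁ c₂ c₃ x₀) := by
  unfold cubic; fun_prop

theorem norm_cubic_le {x : ℝ} (hx : x₀ ≤ x) :
    ‖cubic c₀ c₁ c₂ c₃ x₀ x‖ ≤
      ‖c₀‖ + ‖c₁‖ * (x - x₀) + ‖c₂‖ * (x - x₀) ^ 2 + ‖c₃‖ * (x - x₀) ^ 3 := by
  have hd : ‖((x - x₀ : ℝ) : ℂ)‖ = x - x₀ := by
    rw [Complex.norm_real, Real.norm_of_nonneg (sub_nonneg.2 hx)]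
  refine norm_add₄_le.trans ?_
  simp only [norm_mul, norm_pow, hd, le_refl]

end Cubic

noncomputable def splineCoeff₂ (lam : ℤ → ℝ) (f : ℤ → ℂ) (n : ℤ) : ℂ :=
  2 * dd2 lam f (n - 1) - dd2 lam f n

noncomputable def splineCoeff₃ (lam : ℤ → ℝ) (f : ℤ → ℂ) (n : ℤ) : ℂ :=
  (dd2 lam f n - dd2 lam f (n - 1)) / ((lam (n + 1) - lam n : ℝ) : ℂ)

/-- The cubic on `[λ_n, λ_{n+1}]` with values `f_n, f_{n+1}` and slopes `α_n, α_{n+1}` at the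
endpoints. -/
noncomputable def splinePiece (lam : ℤ → ℝ) (f : ℤ → ℂ) (n : ℤ) : ℝ → ℂ :=
  cubic (f n) (alphaN lam f n) (splineCoeff₂ lam f n) (splineCoeff₃ lam f n) (lam n)

noncomputable def splinePieceDeriv (lam : ℤ → ℝ) (f : ℤ → ℂ) (n : ℤ) : ℝ → ℂ :=
  cubic (alphaN lam f n) (2 * splineCoeff₂ lam f n) (3 * splineCoeff₃ lam f n) 0 (lam n)

noncomputable def splinePieceDeriv2 (lam : ℤ → ℝ) (f : ℤ → ℂ) (n : ℤ) : ℝ → ℂ :=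
  cubic (2 * splineCoeff₂ lam f n) (6 * splineCoeff₃ lam f n) 0 0 (lam n)

noncomputable def hermiteSpline {lam : ℤ → ℝ} (hg : GoodSeq lam) (f : ℤ → ℂ) : ℝ → ℂ :=
  hg.glue (splinePiece lam f)

noncomputable def hermiteSplineDeriv2 {lam : ℤ → ℝ} (hg : GoodSeq lam) (f : ℤ → ℂ) : ℝ → ℂ :=
  hg.glue (splinePieceDeriv2 lam f)

section HermiteSpline

variable {lam : ℤ → ℝ} (f : ℤ → ℂ)

theorem hasDerivAt_splinePiece (n : ℤ) (x : ℝ) :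
    HasDerivAt (splinePiece lam f n) (splinePieceDeriv lam f n x) x :=
  hasDerivAt_cubic _ _ _ _ _ x

theorem hasDerivAt_splinePieceDeriv (n : ℤ) (x : ℝ) :
    HasDerivAt (splinePieceDeriv lam f n) (splinePieceDeriv2 lam f n x) x := by
  refine (hasDerivAt_cubic _ _ _ _ _ x).congr_deriv ?_
  simp only [splinePieceDeriv2, cubic]; ring

theorem alphaN_eq_dd1_sub (hs : StrictMono lam) (n : ℤ) :
    alphaN lam f n = dd1 lam f n - ((lam (n + 1) - lam n : ℝ) : ℂ) * dd2 lam f (n - 1) := by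
  have hD : ((lam (n + 1) - lam (n - 1) : ℝ) : ℂ) ≠ 0 :=
    Complex.ofReal_ne_zero.2 (sub_ne_zero.2 (hs (by omega : n - 1 < n + 1)).ne')
  rw [alphaN, dd2, sub_add_cancel, show n - 1 + 2 = n + 1 by ring]
  field_simp
  push_cast
  ring

theorem alphaN_succ_eq_dd1_add (hs : StrictMono lam) (n : ℤ) :
    alphaN lam f (n + 1) = dd1 lam f n + ((lam (n + 1) - lam n : ℝ) : ℂ) * dd2 lam f n := by
  have hD : ((lam (n + 2) - lam n : ℝ) : ℂ) ≠ 0 :=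
    Complex.ofReal_ne_zero.2 (sub_ne_zero.2 (hs (by omega : n < n + 2)).ne')
  rw [alphaN, dd2, add_sub_cancel_right, add_assoc, one_add_one_eq_two]
  field_simp
  push_cast
  ring

theorem splinePiece_succ (hs : StrictMono lam) (n : ℤ) :
    splinePiece lam f n (lam (n + 1)) = f (n + 1) := by
  have hh : ((lam (n + 1) - lam n : ℝ) : ℂ) ≠ 0 :=
    Complex.ofReal_ne_zero.2 (sub_ne_zero.2 (hs (lt_add_one n)).ne')
  rw [splinePiece, cubic, alphaN_eq_dd1_sub f hs, splineCoeff₂, splineCoeff₃, dd1]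
  field_simp
  ring

theorem splinePieceDeriv_succ (hs : StrictMono lam) (n : ℤ) :
    splinePieceDeriv lam f n (lam (n + 1)) = alphaN lam f (n + 1) := by
  have hh : ((lam (n + 1) - lam n : ℝ) : ℂ) ≠ 0 :=
    Complex.ofReal_ne_zero.2 (sub_ne_zero.2 (hs (lt_add_one n)).ne')
  rw [splinePieceDeriv, cubic, alphaN_eq_dd1_sub f hs, alphaN_succ_eq_dd1_add f hs, splineCoeff₂,
    splineCoeff₃]
  field_simp
  ring

theorem splinePiece_match (hs : StrictMono lam) (n : ℤ) :
    splinePiece lam f n (lam (n + 1)) = splinePiece lam f (n + 1) (lam (n + 1)) := by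
  rw [splinePiece_succ f hs, splinePiece, cubic_self]

theorem splinePieceDeriv_match (hs : StrictMono lam) (n : ℤ) :
    splinePieceDeriv lam f n (lam (n + 1)) = splinePieceDeriv lam f (n + 1) (lam (n + 1)) := by
  rw [splinePieceDeriv_succ f hs, splinePieceDeriv, cubic_self]

theorem hasDerivAt_hermiteSpline (hg : GoodSeq lam) (x : ℝ) :
    HasDerivAt (hermiteSpline hg f) (hg.glue (splinePieceDeriv lam f) x) x :=
  hg.hasDerivAt_glue (hasDerivAt_splinePiece f) (splinePiece_match f hg.1)
    (splinePieceDeriv_match f hg.1) x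

theorem deriv_hermiteSpline (hg : GoodSeq lam) :
    deriv (hermiteSpline hg f) = hg.glue (splinePieceDeriv lam f) :=
  funext fun x => (hasDerivAt_hermiteSpline f hg x).deriv

theorem admissibleExt_hermiteSpline (hg : GoodSeq lam) :
    AdmissibleExt 2 lam f (hermiteSpline hg f) (hermiteSplineDeriv2 hg f) := by
  have hderiv := deriv_hermiteSpline f hg
  have hcont : Continuous (hg.glue (splinePieceDeriv lam f)) :=
    hg.continuous_glue (fun n => continuous_cubic _ _ _ _ _) (splinePieceDeriv_match f hg.1)
  have hloc : LocallyIntegrable (hermiteSplineDeriv2 hg f) volume :=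
    hg.locallyIntegrable_glue fun n => continuous_cubic _ _ _ _ _
  refine admissibleExt_two_iff.2 ⟨?_, hloc, fun a b hab => ?_, fun n => ?_⟩
  · exact contDiff_one_iff_deriv.2
      ⟨fun x => (hasDerivAt_hermiteSpline f hg x).differentiableAt, hderiv ▸ hcont⟩
  · rw [hderiv]
    exact (integral_eq_sub_of_hasDeriv_right_of_le hab hcont.continuousOn
      (fun x _ => hg.hasDerivWithinAt_Ioi_glue (hasDerivAt_splinePieceDeriv f) x)
      (hloc.integrableOn_isCompact isCompact_uIcc).intervalIntegrable).symm
  · rw [hermiteSpline, GoodSeq.glue, hg.index_lam, splinePiece, cubic_self]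

end HermiteSpline

section UpperBound

variable {lam : ℤ → ℝ} (f : ℤ → ℂ)

theorem norm_alphaN_le (hs : StrictMono lam) (n : ℤ) :
    ‖alphaN lam f n‖ ≤ ‖dd1 lam f n‖ + (lam (n + 1) - lam n) * ‖dd2 lam f (n - 1)‖ := by
  rw [alphaN_eq_dd1_sub f hs]
  refine (norm_sub_le _ _).trans ?_
  rw [norm_mul, Complex.norm_real, Real.norm_of_nonneg (sub_pos.2 (hs (lt_add_one n))).le]

theorem norm_splineCoeff₂_le (n : ℤ) :
    ‖splineCoeff₂ lam f n‖ ≤ 2 * ‖dd2 lam f (n - 1)‖ + ‖dd2 lam f n‖ := by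
  refine (norm_sub_le _ _).trans ?_
  rw [norm_mul, Complex.norm_two]

theorem mul_norm_splineCoeff₃_le (hs : StrictMono lam) (n : ℤ) :
    (lam (n + 1) - lam n) * ‖splineCoeff₃ lam f n‖ ≤ ‖dd2 lam f (n - 1)‖ + ‖dd2 lam f n‖ := by
  have hh : 0 < lam (n + 1) - lam n := sub_pos.2 (hs (lt_add_one n))
  rw [splineCoeff₃, norm_div, Complex.norm_real, Real.norm_of_nonneg hh.le,
    mul_div_cancel₀ _ hh.ne', add_comm]
  exact norm_sub_le _ _

theorem norm_splinePiece_add_norm_le (hs : StrictMono lam) (n : ℤ) {x : ℝ}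
    (hx : x ∈ Icc (lam n) (lam (n + 1))) :
    ‖splinePiece lam f n x‖ + ‖splinePieceDeriv2 lam f n x‖ ≤
      ‖f n‖ + (lam (n + 1) - lam n) * ‖dd1 lam f n‖ +
        (4 * (lam (n + 1) - lam n) ^ 2 + 10) * (‖dd2 lam f (n - 1)‖ + ‖dd2 lam f n‖) := by
  have hP := norm_cubic_le (f n) (alphaN lam f n) (splineCoeff₂ lam f n) (splineCoeff₃ lam f n)
    (lam n) hx.1
  have hP₂ := norm_cubic_le (2 * splineCoeff₂ lam f n) (6 * splineCoeff₃ lam f n) 0 0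
    (lam n) hx.1
  have hα := norm_alphaN_le f hs n
  have hc₂ := norm_splineCoeff₂_le (lam := lam) f n
  have hc₃ := mul_norm_splineCoeff₃_le f hs n
  simp only [norm_zero, zero_mul, add_zero, norm_mul, Complex.norm_ofNat] at hP₂
  rw [splinePiece, splinePieceDeriv2]
  set h := lam (n + 1) - lam n
  set d := x - lam n
  set A := ‖dd2 lam f (n - 1)‖
  set B := ‖dd2 lam f n‖
  have hd₀ : 0 ≤ d := sub_nonneg.2 hx.1
  have hdh : d ≤ h := sub_le_sub_right hx.2 _
  have hA : 0 ≤ A := norm_nonneg _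
  have hB : 0 ≤ B := norm_nonneg _
  have hc₃₀ := norm_nonneg (splineCoeff₃ lam f n)
  have t₁ : ‖alphaN lam f n‖ * d ≤ (‖dd1 lam f n‖ + h * A) * h :=
    mul_le_mul hα hdh hd₀ (by nlinarith [norm_nonneg (dd1 lam f n)])
  have t₂ : ‖splineCoeff₂ lam f n‖ * d ^ 2 ≤ (2 * A + B) * h ^ 2 :=
    mul_le_mul hc₂ (pow_le_pow_left₀ hd₀ hdh 2) (by positivity) (by linarith)
  have t₃ : ‖splineCoeff₃ lam f n‖ * d ^ 3 ≤ (A + B) * h ^ 2 := by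
    calc ‖splineCoeff₃ lam f n‖ * d ^ 3 ≤ ‖splineCoeff₃ lam f n‖ * h ^ 3 := by gcongr
      _ = h * ‖splineCoeff₃ lam f n‖ * h ^ 2 := by ring
      _ ≤ (A + B) * h ^ 2 := by gcongr
  have t₄ : ‖splineCoeff₃ lam f n‖ * d ≤ A + B :=
    (mul_le_mul_of_nonneg_left hdh hc₃₀).trans (by linarith [mul_comm h ‖splineCoeff₃ lam f n‖])
  nlinarith

theorem norm_hermiteSpline_add_norm_le {K : ℝ} (hg : GoodSeq lam)
    (hK : ∀ n, lam (n + 1) - lam n ≤ K) {n : ℤ} {x : ℝ} (hx : x ∈ Ico (lam n) (lam (n + 1))) :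
    ‖hermiteSpline hg f x‖ + ‖hermiteSplineDeriv2 hg f x‖ ≤
      ‖f n‖ + (lam (n + 1) - lam n) * ‖dd1 lam f n‖ +
        (4 * K ^ 2 + 10) * (‖dd2 lam f (n - 1)‖ + ‖dd2 lam f n‖) := by
  have hhK : (lam (n + 1) - lam n) ^ 2 ≤ K ^ 2 := by nlinarith [hK n, hg.1 (lt_add_one n)]
  rw [hermiteSpline, hermiteSplineDeriv2, hg.glue_eqOn_Ico _ n hx, hg.glue_eqOn_Ico _ n hx]
  refine (norm_splinePiece_add_norm_le f hg.1 n (Ico_subset_Icc_self hx)).trans ?_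
  gcongr

theorem lintegral_Ico_hermiteSpline_le {p K : ℝ} (hp : 1 ≤ p) (hg : GoodSeq lam)
    (hK : ∀ n, lam (n + 1) - lam n ≤ K) (n : ℤ) :
    ∫⁻ t in Ico (lam n) (lam (n + 1)),
        ENNReal.ofReal ((‖hermiteSpline hg f t‖ + ‖hermiteSplineDeriv2 hg f t‖) ^ p) ≤
      ENNReal.ofReal (4 ^ (p - 1) * (4 * K ^ 2 + 10) ^ p) *
        (ENNReal.ofReal ((lam (n - 1 + 2) - lam (n - 1)) * ‖dd2 lam f (n - 1)‖ ^ p) +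
          ENNReal.ofReal ((lam (n + 2) - lam n) * ‖dd2 lam f n‖ ^ p) +
          ENNReal.ofReal ((lam (n + 2) - lam n) * ‖f n‖ ^ p) +
          ENNReal.ofReal ((lam (n + 2) - lam n) ^ (p + 1) * ‖dd1 lam f n‖ ^ p)) := by
  have hp₀ : 0 ≤ p := by linarith
  have h₀ := hg.1 (lt_add_one n)
  have h₁ := hg.1 (show n + 1 < n + 2 by omega)
  have hprev := hg.1 (sub_one_lt n)
  have hH : 0 ≤ lam (n + 2) - lam n := by linarith
  have hH' : 0 ≤ lam (n + 1) - lam (n - 1) := by linarith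
  rw [show n - 1 + 2 = n + 1 by ring]
  set M := ‖f n‖ + (lam (n + 1) - lam n) * ‖dd1 lam f n‖ +
    (4 * K ^ 2 + 10) * (‖dd2 lam f (n - 1)‖ + ‖dd2 lam f n‖)
  have hpt : ∀ x ∈ Ico (lam n) (lam (n + 1)),
      ENNReal.ofReal ((‖hermiteSpline hg f x‖ + ‖hermiteSplineDeriv2 hg f x‖) ^ p) ≤
        ENNReal.ofReal (M ^ p) := fun x hx =>
    ENNReal.ofReal_le_ofReal (Real.rpow_le_rpow (by positivity)
      (norm_hermiteSpline_add_norm_le f hg hK hx) hp₀)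
  calc _ ≤ ∫⁻ _ in Ico (lam n) (lam (n + 1)), ENNReal.ofReal (M ^ p) :=
        setLIntegral_mono measurable_const hpt
    _ = ENNReal.ofReal ((lam (n + 1) - lam n) * M ^ p) := by
        rw [setLIntegral_const, Real.volume_Ico, ← ENNReal.ofReal_mul (by positivity), mul_comm]
    _ ≤ ENNReal.ofReal (4 ^ (p - 1) * (4 * K ^ 2 + 10) ^ p *
          ((lam (n + 1) - lam (n - 1)) * ‖dd2 lam f (n - 1)‖ ^ p +
            (lam (n + 2) - lam n) * ‖dd2 lam f n‖ ^ p + (lam (n + 2) - lam n) * ‖f n‖ ^ p +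
            (lam (n + 2) - lam n) ^ (p + 1) * ‖dd1 lam f n‖ ^ p)) :=
        ENNReal.ofReal_le_ofReal (mul_rpow_add_le hp (by linarith) (by linarith) (by linarith)
          (norm_nonneg _) (norm_nonneg _) (norm_nonneg _) (norm_nonneg _) (by nlinarith))
    _ = _ := by
        rw [ENNReal.ofReal_mul (by positivity),
          ENNReal.ofReal_add (by positivity) (mul_nonneg (Real.rpow_nonneg hH _) (by positivity)),
          ENNReal.ofReal_add (by positivity) (mul_nonneg hH (by positivity)),
          ENNReal.ofReal_add (mul_nonneg hH' (by positivity)) (mul_nonneg hH (by positivity))]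

theorem sobolevNormRpow_hermiteSpline_le {p K : ℝ} (hp : 1 ≤ p) (hg : GoodSeq lam)
    (hK : ∀ n, lam (n + 1) - lam n ≤ K) :
    sobolevNormRpow p (hermiteSpline hg f) (hermiteSplineDeriv2 hg f) ≤
      ENNReal.ofReal ((4 * (4 * K ^ 2 + 10)) ^ p) * discreteNormRpow p lam f := by
  set S := hermiteSpline hg f
  set S₂ := hermiteSplineDeriv2 hg f
  set w : ℤ → ℝ≥0∞ := fun n => ENNReal.ofReal ((lam (n + 2) - lam n) * ‖dd2 lam f n‖ ^ p)
  have hS : Continuous S :=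
    (admissibleExt_two_iff.1 (admissibleExt_hermiteSpline f hg)).1.continuous
  have hshift : ∑' n, w (n - 1) = ∑' n, w n := (Equiv.subRight 1).tsum_eq w
  calc sobolevNormRpow p S S₂
      ≤ ∑' n, ∫⁻ t in Ico (lam n) (lam (n + 1)), ENNReal.ofReal ((‖S t‖ + ‖S₂ t‖) ^ p) :=
        (sobolevNormRpow_le_lintegral hp hS).trans_eq (hg.lintegral_eq_tsum_Ico _)
    _ ≤ ∑' n, ENNReal.ofReal (4 ^ (p - 1) * (4 * K ^ 2 + 10) ^ p) * (w (n - 1) + w n +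
          ENNReal.ofReal ((lam (n + 2) - lam n) * ‖f n‖ ^ p) +
          ENNReal.ofReal ((lam (n + 2) - lam n) ^ (p + 1) * ‖dd1 lam f n‖ ^ p)) :=
        ENNReal.tsum_le_tsum fun n => lintegral_Ico_hermiteSpline_le f hp hg hK n
    _ = ENNReal.ofReal (4 ^ (p - 1) * (4 * K ^ 2 + 10) ^ p) *
          (discreteNormRpow p lam f + ∑' n, w n) := by
        rw [ENNReal.tsum_mul_left, ENNReal.tsum_add, ENNReal.tsum_add, ENNReal.tsum_add, hshift,
          discreteNormRpow]
        ring
    _ ≤ ENNReal.ofReal (4 ^ (p - 1) * (4 * K ^ 2 + 10) ^ p) * (2 * discreteNormRpow p lam f) := by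
        gcongr
        rw [two_mul]
        gcongr
        exact le_self_add.trans le_self_add
    _ ≤ _ := by
        rw [← mul_assoc]
        gcongr
        exact ofReal_four_rpow_mul_two_le (by positivity)

end UpperBound

theorem stmt5_general (K : ℝ) :
    ∃ c C : ℝ, 0 < c ∧ c ≤ C ∧
      ∀ p : ℝ, 1 ≤ p → ∀ lam : ℤ → ℝ, GoodSeq lam →
        (∀ n : ℤ, lam (n + 1) - lam n ≤ K) → ∀ f : ℤ → ℂ,
        ENNReal.ofReal c *
            ((∑' n : ℤ, ENNReal.ofReal ((lam (n + 2) - lam n) *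
                ‖dd2 lam f n‖ ^ p)) +
              (∑' n : ℤ, ENNReal.ofReal ((lam (n + 2) - lam n) *
                ‖f n‖ ^ p)) +
              ∑' n : ℤ, ENNReal.ofReal ((lam (n + 2) - lam n) ^ (p + 1) *
                ‖dd1 lam f n‖ ^ p)) ^ (1 / p) ≤ traceW 2 p lam f ∧
        traceW 2 p lam f ≤
          ENNReal.ofReal C *
            ((∑' n : ℤ, ENNReal.ofReal ((lam (n + 2) - lam n) *
                ‖dd2 lam f n‖ ^ p)) +
              (∑' n : ℤ, ENNReal.ofReal ((lam (n + 2) - lam n) *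
                ‖f n‖ ^ p)) +
              ∑' n : ℤ, ENNReal.ofReal ((lam (n + 2) - lam n) ^ (p + 1) *
                ‖dd1 lam f n‖ ^ p)) ^ (1 / p) := by
  have hM : 0 < 240 * (1 + K ^ 2) := by positivity
  refine ⟨(240 * (1 + K ^ 2))⁻¹, 4 * (4 * K ^ 2 + 10), by positivity,
    (inv_le_one_of_one_le₀ (by nlinarith)).trans (by nlinarith),
    fun p hp lam hg hK f => ⟨?_, ?_⟩⟩
  · refine le_iInf₂ fun F G => le_iInf fun hadm => ?_
    obtain ⟨hF, hG, hFG, hFf⟩ := admissibleExt_two_iff.1 hadm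
    have hlower := rpow_one_div_le_ofReal_mul hM.le (by linarith)
      (discreteNormRpow_le hp hg hK hF hFG hG hFf)
    calc ENNReal.ofReal (240 * (1 + K ^ 2))⁻¹ * discreteNormRpow p lam f ^ (1 / p)
        ≤ ENNReal.ofReal (240 * (1 + K ^ 2))⁻¹ *
            (ENNReal.ofReal (240 * (1 + K ^ 2)) * sobolevNormRpow p F G ^ (1 / p)) := by
          gcongr
      _ = sobolevNormRpow p F G ^ (1 / p) := by
          rw [← mul_assoc, ← ENNReal.ofReal_mul (by positivity), inv_mul_cancel₀ hM.ne',
            ENNReal.ofReal_one, one_mul]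
  · exact iInf₂_le_of_le (hermiteSpline hg f) (hermiteSplineDeriv2 hg f)
      (iInf_le_of_le (admissibleExt_hermiteSpline f hg)
        (rpow_one_div_le_ofReal_mul (by positivity) (by linarith)
          (sobolevNormRpow_hermiteSpline_le f hp hg hK)))

/-- for every `K > 0`, equivalence (constants depending only on `K`) of
`‖·‖_{W^2_p|Λ}` with `N(f)` where `N(f)^p = ∑_n (λ_{n+2}-λ_n)|f[λ_n,λ_{n+1},λ_{n+2}]|^p +
∑_n (λ_{n+2}-λ_n)|f_n|^p + ∑_n (λ_{n+2}-λ_n)^{p+1}|f[λ_n,λ_{n+1}]|^p`, for sequences with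
steps bounded by `K`. -/
theorem stmt5 (K : ℝ) (hK : 0 < K) :
    ∃ c C : ℝ, 0 < c ∧ c ≤ C ∧
      ∀ p : ℝ, 1 ≤ p → ∀ lam : ℤ → ℝ, GoodSeq lam →
        (∀ n : ℤ, lam (n + 1) - lam n ≤ K) → ∀ f : ℤ → ℂ,
        ENNReal.ofReal c *
            ((∑' n : ℤ, ENNReal.ofReal ((lam (n + 2) - lam n) *
                ‖dd2 lam f n‖ ^ p)) +
              (∑' n : ℤ, ENNReal.ofReal ((lam (n + 2) - lam n) *
                ‖f n‖ ^ p)) +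
              ∑' n : ℤ, ENNReal.ofReal ((lam (n + 2) - lam n) ^ (p + 1) *
                ‖dd1 lam f n‖ ^ p)) ^ (1 / p) ≤ traceW 2 p lam f ∧
        traceW 2 p lam f ≤
          ENNReal.ofReal C *
            ((∑' n : ℤ, ENNReal.ofReal ((lam (n + 2) - lam n) *
                ‖dd2 lam f n‖ ^ p)) +
              (∑' n : ℤ, ENNReal.ofReal ((lam (n + 2) - lam n) *
                ‖f n‖ ^ p)) +
              ∑' n : ℤ, ENNReal.ofReal ((lam (n + 2) - lam n) ^ (p + 1) *
                ‖dd1 lam f n‖ ^ p)) ^ (1 / p) :=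
  stmt5_general K
end

section
/- Let r ≥ 1 be an integer, p a real number with 1 ≤ p < ∞, K > 0, A > 0, and λ : ℤ → ℝ a strictly increasing sequence with λ_n → ±∞ as n → ±∞ and λ_{n+1} − λ_n ≤ K for all n. Let T assign to each f : ℤ → ℂ a function Tf : ℝ → ℂ, and suppose that for every f with ‖f‖_{L^r_p|Λ} < ∞, Tf is an admissible r-extension of f (with associated r-th derivative (Tf)^{(r)}) satisfying (∫_ℝ |(Tf)^{(r)}|^p)^{1/p} ≤ A ‖f‖_{L^r_p|Λ}. Then there is a constant B depending only on r, K, A such that for every f with ‖f‖_{W^r_p|Λ} < ∞ one has (∫_ℝ |Tf|^p + ∫_ℝ |(Tf)^{(r)}|^p)^{1/p} ≤ B ‖f‖_{W^r_p|Λ}. -/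
/-!
Let `F₀` be any admissible extension of `f`. Then `D = Tf - F₀` extends the zero sequence, so
by iterating Rolle's theorem (on real and imaginary parts) every derivative `D^{(k)}`, `k < r`,
vanishes within distance `2^{r-1} K` of every point. Integrating `r` times from these zeros bounds
`|D x|` by a multiple of `∫ |D^{(r)}|` over a ball of fixed radius around `x`, and Hölder's
inequality with Fubini turns this into the Poincaré inequality `‖D‖_p ≤ C ‖D^{(r)}‖_p`. Hence
`‖Tf‖_p ≤ ‖F₀‖_p + C (‖(Tf)^{(r)}‖_p + ‖F₀^{(r)}‖_p) ≤ (C + 1)(A + 1) ‖F₀‖_{W^r_p}`, and it remains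
to take the infimum over `F₀`.
-/

open MeasureTheory
open scoped ENNReal NNReal

open Set Metric
open scoped Interval

section WeakDeriv

variable {E F : Type*} [NormedAddCommGroup E] [NormedSpace ℝ E]
  [NormedAddCommGroup F] [NormedSpace ℝ F]

def HasWeakIteratedDerivSucc (m : ℕ) (u g : ℝ → E) : Prop :=
  ContDiff ℝ m u ∧ LocallyIntegrable g ∧
    ∀ a b : ℝ, iteratedDeriv m u b - iteratedDeriv m u a = ∫ t in a..b, g t

theorem AdmissibleExt.hasWeakIteratedDerivSucc {r : ℕ} {lam : ℤ → ℝ} {f : ℤ → ℂ} {F G : ℝ → ℂ}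
    (h : AdmissibleExt r lam f F G) : HasWeakIteratedDerivSucc (r - 1) F G := by
  obtain ⟨hF, hG, hftc, -⟩ := h
  refine ⟨hF, hG, fun a b => ?_⟩
  rcases le_total a b with hab | hba
  · exact hftc a b hab
  · rw [intervalIntegral.integral_symm, ← hftc b a hba, neg_sub]

theorem enorm_intervalIntegral_le (g : ℝ → E) (a b : ℝ) :
    ‖∫ t in a..b, g t‖ₑ ≤ ∫⁻ t in Ι a b, ‖g t‖ₑ := by
  rw [← ofReal_norm, intervalIntegral.norm_integral_eq_norm_integral_uIoc,
    ofReal_norm]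
  exact enorm_integral_le_lintegral_enorm _

theorem uIoc_subset_closedBall {ξ y L : ℝ} (h : dist ξ y ≤ L) : Ι ξ y ⊆ closedBall y L := by
  have hξ : ξ ∈ closedBall y L := h
  have hy : y ∈ closedBall y L := mem_closedBall_self (dist_nonneg.trans h)
  rw [Real.closedBall_eq_Icc] at hξ hy ⊢
  exact uIoc_subset_uIcc.trans (uIcc_subset_Icc hξ hy)

namespace HasWeakIteratedDerivSucc

variable {m : ℕ} {u v g h : ℝ → E}

theorem intervalIntegrable (hu : HasWeakIteratedDerivSucc m u g) (a b : ℝ) :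
    IntervalIntegrable g volume a b :=
  (hu.2.1.integrableOn_isCompact isCompact_uIcc).intervalIntegrable

theorem sub (hu : HasWeakIteratedDerivSucc m u g) (hv : HasWeakIteratedDerivSucc m v h) :
    HasWeakIteratedDerivSucc m (u - v) (g - h) := by
  refine ⟨hu.1.sub hv.1, hu.2.1.sub hv.2.1, fun a b => ?_⟩
  rw [iteratedDeriv_sub hu.1.contDiffAt hv.1.contDiffAt,
    iteratedDeriv_sub hu.1.contDiffAt hv.1.contDiffAt, Pi.sub_def,
    intervalIntegral.integral_sub (hu.intervalIntegrable a b) (hv.intervalIntegrable a b),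
    ← hu.2.2, ← hv.2.2]
  abel

theorem iteratedDeriv_clm_comp (ℓ : E →L[ℝ] F) {u : ℝ → E} (hu : ContDiff ℝ m u) (x : ℝ) :
    iteratedDeriv m (ℓ ∘ u) x = ℓ (iteratedDeriv m u x) := by
  rw [iteratedDeriv_eq_iteratedFDeriv, iteratedDeriv_eq_iteratedFDeriv,
    ℓ.iteratedFDeriv_comp_left hu.contDiffAt le_rfl]
  rfl

theorem clm_comp [CompleteSpace E] [CompleteSpace F] (hu : HasWeakIteratedDerivSucc m u g)
    (ℓ : E →L[ℝ] F) :
    HasWeakIteratedDerivSucc m (ℓ ∘ u) (ℓ ∘ g) := by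
  refine ⟨ℓ.contDiff.comp hu.1, locallyIntegrable_iff.2 fun k hk =>
    ℓ.integrable_comp (hu.2.1.integrableOn_isCompact hk), fun a b => ?_⟩
  rw [iteratedDeriv_clm_comp ℓ hu.1, iteratedDeriv_clm_comp ℓ hu.1, ← map_sub, hu.2.2]
  exact (ℓ.intervalIntegral_comp_comm (hu.intervalIntegrable a b)).symm

theorem deriv (hu : HasWeakIteratedDerivSucc (m + 1) u g) :
    HasWeakIteratedDerivSucc m (deriv u) g := by
  refine ⟨(contDiff_succ_iff_deriv.mp (by exact_mod_cast hu.1)).2.2, hu.2.1, fun a b => ?_⟩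
  rw [← iteratedDeriv_succ', hu.2.2]

theorem enorm_le_of_forall_exists_zero [CompleteSpace E] (hu : HasWeakIteratedDerivSucc m u g)
    {L : ℝ} (hzero : ∀ k ≤ m, ∀ y, ∃ ξ, dist ξ y ≤ L ∧ iteratedDeriv k u ξ = 0) (y : ℝ) :
    ‖u y‖ₑ ≤ ENNReal.ofReal L ^ m * ∫⁻ t in closedBall y ((m + 1) * L), ‖g t‖ₑ := by
  induction m generalizing u y with
  | zero =>
    obtain ⟨ξ, hξy, hξ⟩ := hzero 0 le_rfl y
    have hftc : u y = ∫ t in ξ..y, g t := by simpa [hξ] using hu.2.2 ξ y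
    rw [hftc, pow_zero, one_mul, Nat.cast_zero, zero_add, one_mul]
    exact (enorm_intervalIntegral_le g ξ y).trans (lintegral_mono_set (uIoc_subset_closedBall hξy))
  | succ m ih =>
    obtain ⟨ξ, hξy, hξ⟩ := hzero 0 (Nat.zero_le _) y
    have hderiv := ih hu.deriv (fun k hk t => by
      simpa only [← iteratedDeriv_succ'] using hzero (k + 1) (by omega) t)
    have hξ : u ξ = 0 := by simpa using hξ
    have hftc : u y = ∫ t in ξ..y, _root_.deriv u t := by
      rw [intervalIntegral.integral_deriv_eq_sub (fun t _ => hu.1.differentiable (by simp) t)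
        (hu.deriv.1.continuous.intervalIntegrable _ _), hξ, sub_zero]
    set I := ∫⁻ t in closedBall y ((↑(m + 1) + 1) * L), ‖g t‖ₑ
    calc ‖u y‖ₑ ≤ ∫⁻ t in Ι ξ y, ‖_root_.deriv u t‖ₑ := hftc ▸ enorm_intervalIntegral_le _ ξ y
      _ ≤ ∫⁻ _ in Ι ξ y, ENNReal.ofReal L ^ m * I := by
        refine setLIntegral_mono' measurableSet_uIoc fun t ht => (hderiv t).trans ?_
        refine mul_le_mul_right (lintegral_mono_set (closedBall_subset_closedBall' ?_)) _
        have := uIoc_subset_closedBall hξy ht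
        rw [mem_closedBall] at this
        push_cast
        linarith
      _ = ENNReal.ofReal |y - ξ| * (ENNReal.ofReal L ^ m * I) := by
        rw [setLIntegral_const, Real.volume_uIoc, mul_comm]
      _ ≤ ENNReal.ofReal L * (ENNReal.ofReal L ^ m * I) := by
        gcongr
        exact (abs_sub_comm y ξ).trans_le hξy
      _ = ENNReal.ofReal L ^ (m + 1) * I := by ring

end HasWeakIteratedDerivSucc

end WeakDeriv

section Nodes

variable {lam : ℤ → ℝ} {K : ℝ}

theorem GoodSeq.exists_mem_Icc (h : GoodSeq lam) (x : ℝ) :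
    ∃ n, x ∈ Icc (lam n) (lam (n + 1)) := by
  obtain ⟨M, hM⟩ := (h.2.2.eventually (Filter.eventually_gt_atTop x)).exists
  obtain ⟨m, hm⟩ := (h.2.1.eventually (Filter.eventually_le_atBot x)).exists
  obtain ⟨n, hn, hmax⟩ := Int.exists_greatest_of_bdd (P := fun z => lam z ≤ x)
    ⟨M, fun z hz => (h.1.lt_iff_lt.1 (hz.trans_lt hM)).le⟩ ⟨m, hm⟩
  exact ⟨n, hn, le_of_not_gt fun h' => by have := hmax (n + 1) h'.le; omega⟩

theorem sub_le_mul_of_gap_le (hgap : ∀ n, lam (n + 1) - lam n ≤ K) {a b : ℤ} (hab : a ≤ b) :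
    lam b - lam a ≤ (b - a) * K := by
  induction b, hab using Int.leInduction with
  | base => simp
  | succ n _ ih => push_cast; linarith [hgap n]

theorem GoodSeq.gap_pos (h : GoodSeq lam) (hgap : ∀ n, lam (n + 1) - lam n ≤ K) : 0 < K := by
  linarith [hgap 0, h.1 (lt_add_one (0 : ℤ))]

theorem exists_iteratedDeriv_eq_zero_mem_Icc (hmono : StrictMono lam) {m : ℕ} {u : ℝ → ℝ}
    (hu : ContDiff ℝ m u) (hz : ∀ n, u (lam n) = 0) {k : ℕ} (hk : k ≤ m) (n : ℤ) :
    ∃ ξ ∈ Icc (lam n) (lam (n + (2 ^ k - 1))), iteratedDeriv k u ξ = 0 := by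
  induction k generalizing n with
  | zero => exact ⟨lam n, by simp, by simpa using hz n⟩
  | succ k ih =>
    obtain ⟨ξ₁, ⟨h₁, h₁'⟩, hξ₁⟩ := ih (by omega) n
    obtain ⟨ξ₂, ⟨h₂, h₂'⟩, hξ₂⟩ := ih (by omega) (n + 2 ^ k)
    have hlt : ξ₁ < ξ₂ := h₁'.trans_lt ((hmono (by omega)).trans_le h₂)
    obtain ⟨c, hc, hc0⟩ := exists_deriv_eq_zero hlt
      (hu.continuous_iteratedDeriv k (by exact_mod_cast (by omega : k ≤ m))).continuousOn
      (hξ₁.trans hξ₂.symm)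
    refine ⟨c, ⟨h₁.trans hc.1.le, hc.2.le.trans (h₂'.trans_eq ?_)⟩, ?_⟩
    · congr 1; ring
    · rwa [iteratedDeriv_succ]

theorem GoodSeq.exists_iteratedDeriv_eq_zero_near (h : GoodSeq lam)
    (hgap : ∀ n, lam (n + 1) - lam n ≤ K) {m : ℕ} {u : ℝ → ℝ} (hu : ContDiff ℝ m u)
    (hz : ∀ n, u (lam n) = 0) {k : ℕ} (hk : k ≤ m) (y : ℝ) :
    ∃ ξ, dist ξ y ≤ 2 ^ m * K ∧ iteratedDeriv k u ξ = 0 := by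
  obtain ⟨n, hn, hn'⟩ := h.exists_mem_Icc y
  obtain ⟨ξ, ⟨hξ, hξ'⟩, hξ0⟩ :=
    exists_iteratedDeriv_eq_zero_mem_Icc h.1 hu hz hk (n + 1 - (2 ^ k - 1))
  have hK := h.gap_pos hgap
  have hspan := sub_le_mul_of_gap_le hgap (a := n + 1 - (2 ^ k - 1)) (b := n + 1)
    (by have := one_le_pow₀ (M₀ := ℤ) (n := k) one_le_two; omega)
  have h2k : (2 : ℝ) ^ k ≤ 2 ^ m := pow_le_pow_right₀ one_le_two hk
  simp only [sub_add_cancel] at hξ'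
  push_cast at hspan
  refine ⟨ξ, abs_le.2 ⟨?_, ?_⟩, hξ0⟩ <;> nlinarith [hgap n]

end Nodes

theorem GoodSeq.enorm_le_of_hasWeakIteratedDerivSucc {lam : ℤ → ℝ} {K : ℝ} (h : GoodSeq lam)
    (hgap : ∀ n, lam (n + 1) - lam n ≤ K) {m : ℕ} {D G : ℝ → ℂ}
    (hD : HasWeakIteratedDerivSucc m D G) (hz : ∀ n, D (lam n) = 0) (x : ℝ) :
    ‖D x‖ₑ ≤ 2 * ENNReal.ofReal (2 ^ m * K) ^ m *
      ∫⁻ t in closedBall x ((m + 1) * (2 ^ m * K)), ‖G t‖ₑ := by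
  have hpart : ∀ ℓ : ℂ →L[ℝ] ℝ, (∀ z, ‖ℓ z‖ ≤ ‖z‖) → ‖ℓ (D x)‖ₑ ≤
      ENNReal.ofReal (2 ^ m * K) ^ m * ∫⁻ t in closedBall x ((m + 1) * (2 ^ m * K)), ‖G t‖ₑ := by
    intro ℓ hℓ
    refine ((hD.clm_comp ℓ).enorm_le_of_forall_exists_zero (fun k hk y =>
      h.exists_iteratedDeriv_eq_zero_near hgap (ℓ.contDiff.comp hD.1) (by simp [hz]) hk y)
      x).trans ?_
    gcongr with t
    exact enorm_le_iff_norm_le.2 (hℓ _)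
  have hsplit : ‖D x‖ₑ ≤ ‖Complex.reCLM (D x)‖ₑ + ‖Complex.imCLM (D x)‖ₑ := by
    rw [Complex.reCLM_apply, Complex.imCLM_apply, Real.enorm_eq_ofReal_abs,
      Real.enorm_eq_ofReal_abs, ← ENNReal.ofReal_add (abs_nonneg _) (abs_nonneg _), ← ofReal_norm]
    exact ENNReal.ofReal_le_ofReal (Complex.norm_le_abs_re_add_abs_im _)
  refine hsplit.trans ?_
  rw [two_mul, add_mul]
  exact add_le_add (hpart _ fun z => Complex.abs_re_le_norm z)
    (hpart _ fun z => Complex.abs_im_le_norm z)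

section LocalAverages

theorem rpow_setLIntegral_le {α : Type*} [MeasurableSpace α] {μ : Measure α} {s : Set α}
    {c : α → ℝ≥0∞} (hc : AEMeasurable c (μ.restrict s)) {p : ℝ} (hp : 1 ≤ p) :
    (∫⁻ t in s, c t ∂μ) ^ p ≤ μ s ^ (p - 1) * ∫⁻ t in s, c t ^ p ∂μ := by
  rcases hp.eq_or_lt with rfl | hp1
  · simp
  have hp0 : 0 < p := zero_lt_one.trans hp1
  have hHolder := ENNReal.lintegral_mul_le_Lp_mul_Lq (μ.restrict s)
    (Real.HolderConjugate.conjExponent hp1) hc (aemeasurable_const (b := 1))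
  simp only [Pi.mul_apply, mul_one, ENNReal.one_rpow, setLIntegral_one] at hHolder
  have hq : 1 / p.conjExponent * p = p - 1 := by
    rw [Real.conjExponent]
    field_simp
  calc (∫⁻ t in s, c t ∂μ) ^ p
      ≤ ((∫⁻ t in s, c t ^ p ∂μ) ^ (1 / p) * μ s ^ (1 / p.conjExponent)) ^ p := by gcongr
    _ = μ s ^ (p - 1) * ∫⁻ t in s, c t ^ p ∂μ := by
      rw [ENNReal.mul_rpow_of_nonneg _ _ hp0.le, ← ENNReal.rpow_mul, ← ENNReal.rpow_mul,
        one_div_mul_cancel hp0.ne', ENNReal.rpow_one, hq, mul_comm]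

theorem lintegral_setLIntegral_closedBall {c : ℝ → ℝ≥0∞} (hc : AEMeasurable c) (R : ℝ) :
    ∫⁻ x, ∫⁻ t in closedBall x R, c t = ENNReal.ofReal (2 * R) * ∫⁻ t, c t := by
  set S : Set (ℝ × ℝ) := {q | q.2 ∈ closedBall q.1 R}
  have hS : MeasurableSet S :=
    (isClosed_le (continuous_snd.dist continuous_fst) continuous_const).measurableSet
  calc ∫⁻ x, ∫⁻ t in closedBall x R, c t = ∫⁻ x, ∫⁻ t, S.indicator (fun q => c q.2) (x, t) := by
        refine lintegral_congr fun x => ?_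
        rw [← lintegral_indicator measurableSet_closedBall]
        rfl
    _ = ∫⁻ t, ∫⁻ x, S.indicator (fun q => c q.2) (x, t) := lintegral_lintegral_swap
        ((hc.comp_quasiMeasurePreserving Measure.quasiMeasurePreserving_snd).indicator hS)
    _ = ∫⁻ t, ENNReal.ofReal (2 * R) * c t := by
        refine lintegral_congr fun t => ?_
        rw [← Real.volume_closedBall t R, mul_comm, ← setLIntegral_const,
          ← lintegral_indicator measurableSet_closedBall]
        refine lintegral_congr fun x => ?_
        by_cases h : t ∈ closedBall x R
        · rw [Set.indicator_of_mem (show (x, t) ∈ S from h),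
            Set.indicator_of_mem (mem_closedBall_comm.1 h)]
        · rw [Set.indicator_of_notMem (show (x, t) ∉ S from h),
            Set.indicator_of_notMem (mt mem_closedBall_comm.2 h)]
    _ = ENNReal.ofReal (2 * R) * ∫⁻ t, c t := lintegral_const_mul'' _ hc

variable {E F : Type*} [NormedAddCommGroup E] [NormedAddCommGroup F]

theorem eLpNorm_le_of_enorm_le_setLIntegral_closedBall {D : ℝ → E} {G : ℝ → F}
    (hG : AEStronglyMeasurable G) {C : ℝ≥0∞} (hC : C ≠ ⊤) {R : ℝ}
    (hD : ∀ x, ‖D x‖ₑ ≤ C * ∫⁻ t in closedBall x R, ‖G t‖ₑ) {q : ℝ≥0∞} (hq : 1 ≤ q)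
    (hq' : q ≠ ⊤) : eLpNorm D q volume ≤ C * ENNReal.ofReal (2 * R) * eLpNorm G q volume := by
  have hq0 : q ≠ 0 := (zero_lt_one.trans_le hq).ne'
  have hp : 1 ≤ q.toReal := by simpa using ENNReal.toReal_mono hq' hq
  have hp0 : 0 < q.toReal := zero_lt_one.trans_le hp
  set p := q.toReal
  have hc : AEMeasurable fun t => ‖G t‖ₑ := hG.enorm
  simp only [eLpNorm_eq_lintegral_rpow_enorm_toReal hq0 hq']
  calc (∫⁻ x, ‖D x‖ₑ ^ p) ^ (1 / p)
      ≤ (∫⁻ x, C ^ p * (∫⁻ t in closedBall x R, ‖G t‖ₑ) ^ p) ^ (1 / p) := by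
        gcongr with x
        rw [← ENNReal.mul_rpow_of_nonneg _ _ hp0.le]
        gcongr
        exact hD x
    _ ≤ (C ^ p * (ENNReal.ofReal (2 * R) ^ p * ∫⁻ t, ‖G t‖ₑ ^ p)) ^ (1 / p) := by
        rw [lintegral_const_mul' _ _ (ENNReal.rpow_ne_top_of_nonneg hp0.le hC)]
        gcongr
        calc ∫⁻ x, (∫⁻ t in closedBall x R, ‖G t‖ₑ) ^ p
            ≤ ∫⁻ x, ENNReal.ofReal (2 * R) ^ (p - 1) * ∫⁻ t in closedBall x R, ‖G t‖ₑ ^ p := by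
              refine lintegral_mono fun x => ?_
              rw [← Real.volume_closedBall x R]
              exact rpow_setLIntegral_le hc.restrict hp
          _ = ENNReal.ofReal (2 * R) ^ (p - 1) * ENNReal.ofReal (2 * R) ^ (1 : ℝ) *
                ∫⁻ t, ‖G t‖ₑ ^ p := by
              rw [lintegral_const_mul' _ _ (ENNReal.rpow_ne_top_of_nonneg (by linarith)
                ENNReal.ofReal_ne_top), lintegral_setLIntegral_closedBall (hc.pow_const p),
                ENNReal.rpow_one, mul_assoc]
          _ = ENNReal.ofReal (2 * R) ^ p * ∫⁻ t, ‖G t‖ₑ ^ p := by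
              rw [← ENNReal.rpow_add_of_nonneg _ _ (by linarith) zero_le_one, sub_add_cancel]
    _ = C * ENNReal.ofReal (2 * R) * (∫⁻ t, ‖G t‖ₑ ^ p) ^ (1 / p) := by
        rw [← mul_assoc, ← ENNReal.mul_rpow_of_nonneg _ _ hp0.le,
          ENNReal.mul_rpow_of_nonneg _ _ (by positivity), one_div,
          ENNReal.rpow_rpow_inv hp0.ne']

end LocalAverages

-- `2 (2 ^ m K) ^ m` from the pointwise bound, times the diameter `2 (m + 1) 2 ^ m K` of the ball.
noncomputable def poincareConst (m : ℕ) (K : ℝ) : ℝ := 4 * (m + 1) * (2 ^ m * K) ^ (m + 1)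

theorem GoodSeq.eLpNorm_le_poincareConst_mul {lam : ℤ → ℝ} {K : ℝ} (h : GoodSeq lam)
    (hgap : ∀ n, lam (n + 1) - lam n ≤ K) {m : ℕ} {D G : ℝ → ℂ}
    (hD : HasWeakIteratedDerivSucc m D G) (hz : ∀ n, D (lam n) = 0) {q : ℝ≥0∞} (hq : 1 ≤ q)
    (hq' : q ≠ ⊤) :
    eLpNorm D q volume ≤ ENNReal.ofReal (poincareConst m K) * eLpNorm G q volume := by
  have hL : 0 ≤ 2 ^ m * K := by have := h.gap_pos hgap; positivity
  refine (eLpNorm_le_of_enorm_le_setLIntegral_closedBall hD.2.1.aestronglyMeasurable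
    (by finiteness) (h.enorm_le_of_hasWeakIteratedDerivSucc hgap hD hz) hq hq').trans_eq ?_
  rw [poincareConst, ← ENNReal.ofReal_pow hL, ← ENNReal.ofReal_ofNat 2,
    ← ENNReal.ofReal_mul zero_le_two, ← ENNReal.ofReal_mul (by positivity)]
  congr 2
  ring

theorem lintegral_ofReal_norm_rpow_rpow_eq_eLpNorm {E : Type*} [NormedAddCommGroup E] {p : ℝ}
    (hp : 0 < p) (u : ℝ → E) :
    (∫⁻ t, ENNReal.ofReal (‖u t‖ ^ p)) ^ (1 / p) = eLpNorm u (ENNReal.ofReal p) volume := by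
  rw [eLpNorm_eq_lintegral_rpow_enorm_toReal (by simpa using hp) ENNReal.ofReal_ne_top,
    ENNReal.toReal_ofReal hp.le]
  simp_rw [← ofReal_norm, ENNReal.ofReal_rpow_of_nonneg (norm_nonneg _) hp.le]

theorem traceL_le_traceW (r : ℕ) {p : ℝ} (hp : 0 ≤ p) (lam : ℤ → ℝ) (f : ℤ → ℂ) :
    traceL r p lam f ≤ traceW r p lam f :=
  iInf₂_mono fun _ _ => iInf_mono fun _ => ENNReal.rpow_le_rpow le_add_self (by positivity)

theorem traceL_le_of_admissibleExt {r : ℕ} {p : ℝ} {lam : ℤ → ℝ} {f : ℤ → ℂ} {F G : ℝ → ℂ}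
    (h : AdmissibleExt r lam f F G) :
    traceL r p lam f ≤ (∫⁻ t, ENNReal.ofReal (‖G t‖ ^ p)) ^ (1 / p) :=
  iInf₂_le_of_le F G (iInf_le _ h)

theorem le_mul_traceW {r : ℕ} {p : ℝ} {lam : ℤ → ℝ} {f : ℤ → ℂ} {x c : ℝ≥0∞} (hc0 : c ≠ 0)
    (hc : c ≠ ⊤) (h : ∀ F G, AdmissibleExt r lam f F G →
      x ≤ c * ((∫⁻ t, ENNReal.ofReal (‖F t‖ ^ p)) + ∫⁻ t, ENNReal.ofReal (‖G t‖ ^ p)) ^ (1 / p)) :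
    x ≤ c * traceW r p lam f := by
  simp only [traceW, ENNReal.mul_iInf_of_ne hc0 hc]
  exact le_iInf₂ fun F G => le_iInf (h F G)

theorem max_eLpNorm_le {E : Type*} [NormedAddCommGroup E] {p : ℝ} (hp : 0 < p) (F G : ℝ → E) :
    max (eLpNorm F (ENNReal.ofReal p) volume) (eLpNorm G (ENNReal.ofReal p) volume) ≤
      ((∫⁻ t, ENNReal.ofReal (‖F t‖ ^ p)) + ∫⁻ t, ENNReal.ofReal (‖G t‖ ^ p)) ^ (1 / p) := by
  simp only [← lintegral_ofReal_norm_rpow_rpow_eq_eLpNorm hp]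
  exact max_le (by gcongr; exact le_self_add) (by gcongr; exact le_add_self)

theorem AdmissibleExt.aestronglyMeasurable {r : ℕ} {lam : ℤ → ℝ} {f : ℤ → ℂ} {F G : ℝ → ℂ}
    (h : AdmissibleExt r lam f F G) :
    AEStronglyMeasurable F volume ∧ AEStronglyMeasurable G volume :=
  ⟨h.1.continuous.aestronglyMeasurable, h.2.1.aestronglyMeasurable⟩

theorem GoodSeq.eLpNorm_add_eLpNorm_le {lam : ℤ → ℝ} {K : ℝ} (h : GoodSeq lam)
    (hgap : ∀ n, lam (n + 1) - lam n ≤ K) {r : ℕ} {f : ℤ → ℂ} {F G F₀ G₀ : ℝ → ℂ}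
    (hFG : AdmissibleExt r lam f F G) (hFG₀ : AdmissibleExt r lam f F₀ G₀) {q : ℝ≥0∞}
    (hq : 1 ≤ q) (hq' : q ≠ ⊤) {a : ℝ≥0∞} (hG : eLpNorm G q volume ≤ a * eLpNorm G₀ q volume) :
    eLpNorm F q volume + eLpNorm G q volume ≤
      (ENNReal.ofReal (poincareConst (r - 1) K) + 1) * (a + 1) *
        max (eLpNorm F₀ q volume) (eLpNorm G₀ q volume) := by
  set C := ENNReal.ofReal (poincareConst (r - 1) K)
  set N := max (eLpNorm F₀ q volume) (eLpNorm G₀ q volume)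
  have hF₀ : eLpNorm F₀ q volume ≤ N := le_max_left _ _
  have hG₀ : eLpNorm G₀ q volume ≤ N := le_max_right _ _
  obtain ⟨hFm, hGm⟩ := hFG.aestronglyMeasurable
  obtain ⟨hF₀m, hG₀m⟩ := hFG₀.aestronglyMeasurable
  have hdiff : eLpNorm (F - F₀) q volume ≤ C * eLpNorm (G - G₀) q volume :=
    h.eLpNorm_le_poincareConst_mul hgap
      (hFG.hasWeakIteratedDerivSucc.sub hFG₀.hasWeakIteratedDerivSucc)
      (fun n => by simp [hFG.2.2.2 n, hFG₀.2.2.2 n]) hq hq'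
  have hGN : eLpNorm G q volume ≤ a * N := hG.trans (mul_le_mul_right hG₀ _)
  have hFN : eLpNorm F q volume ≤ C * (a * N + N) + N :=
    calc eLpNorm F q volume ≤ eLpNorm (F - F₀) q volume + eLpNorm F₀ q volume := by
          simpa using eLpNorm_add_le (hFm.sub hF₀m) hF₀m hq
      _ ≤ C * (eLpNorm G q volume + eLpNorm G₀ q volume) + N := by
          gcongr
          exact hdiff.trans (mul_le_mul_right (eLpNorm_sub_le hGm hG₀m hq) _)
      _ ≤ C * (a * N + N) + N := by gcongr
  calc eLpNorm F q volume + eLpNorm G q volume ≤ C * (a * N + N) + N + a * N := add_le_add hFN hGN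
    _ = (C + 1) * (a + 1) * N := by ring

theorem stmt9_general (r : ℕ) (K A : ℝ) (hK : 0 < K) (hA : 0 < A) :
    ∃ B : ℝ, 0 < B ∧
      ∀ p : ℝ, 1 ≤ p → ∀ lam : ℤ → ℝ, GoodSeq lam →
        (∀ n : ℤ, lam (n + 1) - lam n ≤ K) →
        ∀ T T' : (ℤ → ℂ) → ℝ → ℂ,
        (∀ f : ℤ → ℂ, traceL r p lam f < ⊤ →
          AdmissibleExt r lam f (T f) (T' f) ∧
          (∫⁻ t, ENNReal.ofReal (‖T' f t‖ ^ p)) ^ (1 / p) ≤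
            ENNReal.ofReal A * traceL r p lam f) →
        ∀ f : ℤ → ℂ, traceW r p lam f < ⊤ →
          ((∫⁻ t, ENNReal.ofReal (‖T f t‖ ^ p)) +
              ∫⁻ t, ENNReal.ofReal (‖T' f t‖ ^ p)) ^ (1 / p) ≤
            ENNReal.ofReal B * traceW r p lam f := by
  have hC : 0 ≤ poincareConst (r - 1) K := by unfold poincareConst; positivity
  refine ⟨(poincareConst (r - 1) K + 1) * (A + 1), by positivity, ?_⟩
  intro p hp lam hgood hgap T T' hT f hfin
  have hp0 : 0 < p := by linarith
  have hq : 1 ≤ ENNReal.ofReal p := by simpa using ENNReal.ofReal_le_ofReal hp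
  obtain ⟨hTf, hT'f⟩ := hT f ((traceL_le_traceW r hp0.le lam f).trans_lt hfin)
  have hB : ENNReal.ofReal ((poincareConst (r - 1) K + 1) * (A + 1)) =
      (ENNReal.ofReal (poincareConst (r - 1) K) + 1) * (ENNReal.ofReal A + 1) := by
    rw [ENNReal.ofReal_mul (by positivity), ENNReal.ofReal_add hC zero_le_one,
      ENNReal.ofReal_add hA.le zero_le_one, ENNReal.ofReal_one]
  refine le_mul_traceW (by simp [hB]) ENNReal.ofReal_ne_top fun F G hFG => ?_
  have hT'G : eLpNorm (T' f) (ENNReal.ofReal p) volume ≤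
      ENNReal.ofReal A * eLpNorm G (ENNReal.ofReal p) volume := by
    simpa only [lintegral_ofReal_norm_rpow_rpow_eq_eLpNorm hp0] using
      hT'f.trans (mul_le_mul_right (traceL_le_of_admissibleExt hFG) _)
  calc _ ≤ (∫⁻ t, ENNReal.ofReal (‖T f t‖ ^ p)) ^ (1 / p) +
        (∫⁻ t, ENNReal.ofReal (‖T' f t‖ ^ p)) ^ (1 / p) :=
        ENNReal.rpow_add_le_add_rpow _ _ (by positivity) (by rwa [div_le_one hp0])
    _ ≤ _ := by
      rw [lintegral_ofReal_norm_rpow_rpow_eq_eLpNorm hp0,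
        lintegral_ofReal_norm_rpow_rpow_eq_eLpNorm hp0, hB]
      exact (hgood.eLpNorm_add_eLpNorm_le hgap hTf hFG hq ENNReal.ofReal_ne_top hT'G).trans
        (mul_le_mul_right (max_eLpNorm_le hp0 F G) _)

/-- if `T` assigns to each `f` with finite `L^r_p` trace seminorm an admissible
`r`-extension `Tf` (with `r`-th derivative `T'f`) with `(∫|(Tf)^{(r)}|^p)^{1/p} ≤ A ‖f‖_{L^r_p|Λ}`,
then there is `B` depending only on `r, K, A` with
`(∫|Tf|^p + ∫|(Tf)^{(r)}|^p)^{1/p} ≤ B ‖f‖_{W^r_p|Λ}` whenever `‖f‖_{W^r_p|Λ} < ∞`. -/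
theorem stmt9 (r : ℕ) (hr : 1 ≤ r) (K A : ℝ) (hK : 0 < K) (hA : 0 < A) :
    ∃ B : ℝ, 0 < B ∧
      ∀ p : ℝ, 1 ≤ p → ∀ lam : ℤ → ℝ, GoodSeq lam →
        (∀ n : ℤ, lam (n + 1) - lam n ≤ K) →
        ∀ T T' : (ℤ → ℂ) → ℝ → ℂ,
        (∀ f : ℤ → ℂ, traceL r p lam f < ⊤ →
          AdmissibleExt r lam f (T f) (T' f) ∧
          (∫⁻ t, ENNReal.ofReal (‖T' f t‖ ^ p)) ^ (1 / p) ≤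
            ENNReal.ofReal A * traceL r p lam f) →
        ∀ f : ℤ → ℂ, traceW r p lam f < ⊤ →
          ((∫⁻ t, ENNReal.ofReal (‖T f t‖ ^ p)) +
              ∫⁻ t, ENNReal.ofReal (‖T' f t‖ ^ p)) ^ (1 / p) ≤
            ENNReal.ofReal B * traceW r p lam f :=
  stmt9_general r K A hK hA
end

section
/- Let r ≥ 1 be an integer and K > 0. There is a constant C₁ > 0 depending only on r and K such that the following holds for every real p with 1 ≤ p < ∞. Let λ : ℤ → ℝ be strictly increasing with λ_n → ±∞ as n → ±∞ and λ_{n+1} − λ_n ≤ K for all n, and let F : ℝ → ℂ be an admissible r-extension of f : ℤ → ℂ. Then ∫_ℝ |F(t)|^p dt ≤ C₁^p [ ∫_ℝ |F^{(r)}(t)|^p dt + ‖f‖_{eq,W}^p ]. -/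
open MeasureTheory
open scoped ENNReal NNReal

/-!
On each window `[λ_n, λ_{n+r}]` write `F = P + R`, where `P` is the Newton interpolation
polynomial of `f` at `λ_n, …, λ_{n+r-1}`; its coefficients are the divided differences
`f[λ_n, …, λ_{n+j}]`, `j < r`, so `|P| ≤ ∑_j |f[λ_n, …, λ_{n+j}]| h_n^j` with
`h_n = λ_{n+r} - λ_n ≤ rK`. The remainder `R` has `r` zeros in the window and
`R^{(r-1)} = F^{(r-1)} - const`, so iterating Rolle's theorem gives
`|R| ≤ h_n^{r-1} ∫_{λ_n}^{λ_{n+r}} |F^{(r)}|`. Raising the bound on `[λ_n, λ_{n+1})` to the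
`p`-th power, applying Hölder's inequality to the integral term and summing over `n` (every
point lies in at most `r` windows) gives the estimate with `C₁ = (r + 1) max(1, rK)^r`.
-/

open Finset Polynomial Set

section Newton

variable {F : Type*} [Field F]

noncomputable def dividedDiff (y v : ℕ → F) (j : ℕ) : F :=
  ∑ i ∈ range (j + 1), v i / ∏ l ∈ (range (j + 1)).erase i, (y i - y l)

theorem Lagrange.coeff_interpolate_range_succ {y : ℕ → F} (hy : Function.Injective y)
    (v : ℕ → F) (k : ℕ) :
    (Lagrange.interpolate (range (k + 1)) y v).coeff k = dividedDiff y v k := by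
  have h := Lagrange.coeff_eq_sum (v := y) hy.injOn
    (Lagrange.degree_interpolate_lt (s := range (k + 1)) v hy.injOn)
  rw [card_range, Nat.add_sub_cancel] at h
  rw [h, dividedDiff]
  refine sum_congr rfl fun i hi => ?_
  rw [Lagrange.eval_interpolate_at_node v hy.injOn hi]

theorem Lagrange.interpolate_range_eq_sum_dividedDiff_mul_nodal {y : ℕ → F}
    (hy : Function.Injective y) (v : ℕ → F) (k : ℕ) :
    Lagrange.interpolate (range k) y v =
      ∑ j ∈ range k, C (dividedDiff y v j) * Lagrange.nodal (range j) y := by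
  induction k with
  | zero => simp
  | succ k ih =>
    set I := Lagrange.interpolate (range (k + 1)) y v
    have hN : (Lagrange.nodal (range k) y).natDegree = k := by simp
    have hIdeg : I.degree < ↑(k + 1) := by
      simpa only [card_range] using
        Lagrange.degree_interpolate_lt (s := range (k + 1)) v hy.injOn
    suffices I - C (dividedDiff y v k) * Lagrange.nodal (range k) y =
        Lagrange.interpolate (range k) y v by
      rw [sum_range_succ, ← ih, ← this, sub_add_cancel]
    refine Lagrange.eq_interpolate_of_eval_eq v hy.injOn ?_ fun i hi => ?_
    · rw [card_range, degree_lt_iff_coeff_zero]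
      intro m hm
      rw [coeff_sub, coeff_C_mul]
      rcases hm.lt_or_eq with hm | rfl
      · rw [coeff_eq_zero_of_degree_lt (hIdeg.trans_le (by exact_mod_cast hm)),
          coeff_eq_zero_of_natDegree_lt (by rwa [hN]), mul_zero, sub_zero]
      · have h1 := (Lagrange.nodal_monic (s := range k) (v := y)).coeff_natDegree
        rw [hN] at h1
        rw [Lagrange.coeff_interpolate_range_succ hy, h1, mul_one, sub_self]
    · rw [eval_sub, eval_mul, Lagrange.eval_nodal_at_node hi, mul_zero, sub_zero,
        Lagrange.eval_interpolate_at_node v hy.injOn (mem_range.2 ((mem_range.1 hi).trans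
          k.lt_succ_self))]

end Newton

theorem abs_le_pow_mul_of_zeros {m : ℕ} {a b M : ℝ} {R : ℝ → ℝ} (hR : ContDiff ℝ m R)
    {t : Fin (m + 1) → ℝ} (ht : StrictMono t) (hta : ∀ i, t i ∈ Icc a b)
    (hzero : ∀ i, R (t i) = 0)
    (hosc : ∀ x ∈ Icc a b, ∀ y ∈ Icc a b, |iteratedDeriv m R y - iteratedDeriv m R x| ≤ M)
    {x : ℝ} (hx : x ∈ Icc a b) : |R x| ≤ (b - a) ^ m * M := by
  induction m generalizing R x with
  | zero => simpa [hzero 0] using hosc (t 0) (hta 0) x hx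
  | succ m ih =>
    rw [Nat.cast_succ, contDiff_succ_iff_deriv] at hR
    obtain ⟨hRd, -, hR'⟩ := hR
    have hrolle : ∀ i : Fin (m + 1), ∃ c ∈ Ioo (t i.castSucc) (t i.succ), deriv R c = 0 :=
      fun i => exists_deriv_eq_zero (ht i.castSucc_lt_succ) hRd.continuous.continuousOn
        (by rw [hzero, hzero])
    choose s hs hs0 using hrolle
    have hsmono : StrictMono s := fun i j hij =>
      (hs i).2.trans_le ((ht.monotone (Fin.succ_le_castSucc_iff.2 hij)).trans (hs j).1.le)
    have hsab : ∀ i, s i ∈ Icc a b := fun i =>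
      ⟨(hta i.castSucc).1.trans (hs i).1.le, (hs i).2.le.trans (hta i.succ).2⟩
    have hderiv : ∀ y ∈ Icc a b, ‖deriv R y‖ ≤ (b - a) ^ m * M := fun y hy =>
      ih hR' hsmono hsab hs0 (by simpa only [iteratedDeriv_succ'] using hosc) hy
    have hmvt := (convex_Icc a b).norm_image_sub_le_of_norm_deriv_le
      (fun y _ => hRd y) hderiv (hta 0) hx
    have hdist : |x - t 0| ≤ b - a :=
      abs_le.2 ⟨by linarith [hx.1, (hta 0).2], by linarith [hx.2, (hta 0).1]⟩
    have hM : 0 ≤ (b - a) ^ m * M := (abs_nonneg _).trans (hderiv x hx)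
    calc |R x| = ‖R x - R (t 0)‖ := by rw [hzero, sub_zero, Real.norm_eq_abs]
      _ ≤ (b - a) ^ m * M * ‖x - t 0‖ := hmvt
      _ ≤ (b - a) ^ m * M * (b - a) := mul_le_mul_of_nonneg_left hdist hM
      _ = (b - a) ^ (m + 1) * M := by ring

theorem norm_le_pow_mul_of_zeros {E : Type*} [NormedAddCommGroup E] [NormedSpace ℝ E]
    {m : ℕ} {a b M : ℝ} {R : ℝ → E} (hR : ContDiff ℝ m R)
    {t : Fin (m + 1) → ℝ} (ht : StrictMono t) (hta : ∀ i, t i ∈ Icc a b)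
    (hzero : ∀ i, R (t i) = 0)
    (hosc : ∀ x ∈ Icc a b, ∀ y ∈ Icc a b, ‖iteratedDeriv m R y - iteratedDeriv m R x‖ ≤ M)
    {x : ℝ} (hx : x ∈ Icc a b) : ‖R x‖ ≤ (b - a) ^ m * M := by
  obtain ⟨g, hg, hgx⟩ := exists_dual_vector'' ℝ (R x)
  have hcomp : ∀ y, iteratedDeriv m (g ∘ R) y = g (iteratedDeriv m R y) := fun y => by
    simp only [iteratedDeriv_eq_iteratedFDeriv, g.iteratedFDeriv_comp_left hR.contDiffAt le_rfl]
    rfl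
  have hgle : ∀ z, |g z| ≤ ‖z‖ := fun z => by
    simpa using g.le_of_opNorm_le hg z
  have := abs_le_pow_mul_of_zeros (g.contDiff.comp hR) ht hta (fun i => by simp [hzero])
    (fun u hu w hw => by simpa only [hcomp, ← map_sub] using (hgle _).trans (hosc u hu w hw)) hx
  simpa [hgx] using this

theorem contDiff_polynomial_eval_ofReal (Q : ℂ[X]) {n : WithTop ℕ∞} :
    ContDiff ℝ n fun t : ℝ => Q.eval (t : ℂ) :=
  (Q.differentiable.contDiff.restrict_scalars ℝ).comp Complex.ofRealCLM.contDiff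

theorem iteratedDeriv_polynomial_eval_ofReal (Q : ℂ[X]) (k : ℕ) :
    iteratedDeriv k (fun t : ℝ => Q.eval (t : ℂ)) =
      fun t : ℝ => (derivative^[k] Q).eval (t : ℂ) := by
  induction k generalizing Q with
  | zero => rfl
  | succ k ih =>
    have hderiv : deriv (fun t : ℝ => Q.eval (t : ℂ)) =
        fun t : ℝ => (derivative Q).eval (t : ℂ) :=
      funext fun t => ((Q.hasDerivAt (t : ℂ)).comp_ofReal).deriv
    rw [iteratedDeriv_succ', hderiv, ih, Function.iterate_succ_apply]

theorem iteratedDeriv_polynomial_eval_ofReal_eq_of_natDegree_le {Q : ℂ[X]} {d : ℕ}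
    (hQ : Q.natDegree ≤ d) (s t : ℝ) :
    iteratedDeriv d (fun t : ℝ => Q.eval (t : ℂ)) s =
      iteratedDeriv d (fun t : ℝ => Q.eval (t : ℂ)) t := by
  rw [iteratedDeriv_polynomial_eval_ofReal, eq_C_of_natDegree_le_zero
    ((natDegree_iterate_derivative Q d).trans (by omega))]
  simp

theorem Lagrange.norm_eval_sum_C_mul_nodal_le {𝕜 : Type*} [NormedField 𝕜] (c y : ℕ → 𝕜)
    (r : ℕ) {z : 𝕜} {D : ℝ} (hz : ∀ l < r, ‖z - y l‖ ≤ D) :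
    ‖(∑ j ∈ range r, C (c j) * Lagrange.nodal (range j) y).eval z‖ ≤
      ∑ j ∈ range r, ‖c j‖ * D ^ j := by
  simp only [eval_finsetSum, eval_mul, eval_C, Lagrange.eval_nodal]
  refine (norm_sum_le _ _).trans (sum_le_sum fun j hj => ?_)
  rw [norm_mul, norm_prod]
  refine mul_le_mul_of_nonneg_left ?_ (norm_nonneg _)
  calc ∏ l ∈ range j, ‖z - y l‖ ≤ ∏ _l ∈ range j, D :=
        prod_le_prod (fun _ _ => norm_nonneg _) fun l hl =>
          hz l ((mem_range.1 hl).trans (mem_range.1 hj))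
    _ = D ^ j := by rw [prod_const, card_range]

theorem norm_sub_eval_le_of_eq_at_nodes {m : ℕ} {a b M : ℝ} {F : ℝ → ℂ} {Q : ℂ[X]}
    (hF : ContDiff ℝ m F) (hQ : Q.natDegree ≤ m) {t : Fin (m + 1) → ℝ} (ht : StrictMono t)
    (hta : ∀ i, t i ∈ Icc a b) (hFQ : ∀ i, F (t i) = Q.eval (t i : ℂ))
    (hosc : ∀ x ∈ Icc a b, ∀ y ∈ Icc a b, ‖iteratedDeriv m F y - iteratedDeriv m F x‖ ≤ M)
    {x : ℝ} (hx : x ∈ Icc a b) : ‖F x - Q.eval (x : ℂ)‖ ≤ (b - a) ^ m * M := by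
  have hQc : ContDiff ℝ m fun t : ℝ => Q.eval (t : ℂ) := contDiff_polynomial_eval_ofReal Q
  refine norm_le_pow_mul_of_zeros (R := fun s => F s - Q.eval (s : ℂ)) (hF.sub hQc) ht hta
    (fun i => sub_eq_zero.2 (hFQ i)) (fun u hu w hw => ?_) hx
  rw [iteratedDeriv_fun_sub hF.contDiffAt hQc.contDiffAt,
    iteratedDeriv_fun_sub hF.contDiffAt hQc.contDiffAt,
    iteratedDeriv_polynomial_eval_ofReal_eq_of_natDegree_le hQ w u, sub_sub_sub_cancel_right]
  exact hosc u hu w hw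

theorem norm_sub_le_integral_norm_of_eq_integral {E : Type*} [NormedAddCommGroup E]
    [NormedSpace ℝ E] {Φ G : ℝ → E} {a b : ℝ}
    (hΦ : ∀ u w, u ≤ w → Φ w - Φ u = ∫ t in u..w, G t) (hG : IntegrableOn G (Icc a b))
    {u w : ℝ} (hu : u ∈ Icc a b) (hw : w ∈ Icc a b) : ‖Φ w - Φ u‖ ≤ ∫ t in a..b, ‖G t‖ := by
  wlog huw : u ≤ w generalizing u w
  · rw [← norm_neg, neg_sub]
    exact this hw hu (le_of_not_ge huw)
  rw [hΦ u w huw]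
  refine (intervalIntegral.norm_integral_le_integral_norm huw).trans <|
    intervalIntegral.integral_mono_interval hu.1 huw hw.2
      (Filter.Eventually.of_forall fun _ => norm_nonneg _) ?_
  rw [intervalIntegrable_iff_integrableOn_Icc_of_le (hu.1.trans (huw.trans hw.2))]
  exact hG.norm

theorem ddiv_eq_dividedDiff (lam : ℤ → ℝ) (f : ℤ → ℂ) (n : ℤ) (j : ℕ) :
    ddiv lam f n j = dividedDiff (fun l => (lam (n + l) : ℂ)) (fun i => f (n + i)) j := by
  simp only [ddiv, dividedDiff, Complex.ofReal_sub]

theorem AdmissibleExt.norm_le {r : ℕ} (hr : 1 ≤ r) {lam : ℤ → ℝ} (hlam : StrictMono lam)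
    {f : ℤ → ℂ} {F G : ℝ → ℂ} (hadm : AdmissibleExt r lam f F G) (n : ℤ)
    {x : ℝ} (hx : x ∈ Icc (lam n) (lam (n + r))) :
    ‖F x‖ ≤ ∑ j ∈ range r, ‖ddiv lam f n j‖ * (lam (n + r) - lam n) ^ j +
      (∫ t in lam n..lam (n + r), ‖G t‖) * (lam (n + r) - lam n) ^ (r - 1) := by
  obtain ⟨hF, hGloc, hFG, hval⟩ := hadm
  obtain ⟨m, rfl⟩ : ∃ m, r = m + 1 := ⟨r - 1, by omega⟩
  rw [Nat.add_sub_cancel] at hF hFG ⊢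
  set y : ℕ → ℂ := fun l => (lam (n + l) : ℂ)
  have hy : Function.Injective y := fun k l h => by
    have := hlam.injective (Complex.ofReal_injective h)
    omega
  set Q := ∑ j ∈ range (m + 1), C (ddiv lam f n j) * Lagrange.nodal (range j) y
  have hQ : Q = Lagrange.interpolate (range (m + 1)) y fun i => f (n + i) := by
    simp only [Q, ddiv_eq_dividedDiff]
    exact (Lagrange.interpolate_range_eq_sum_dividedDiff_mul_nodal hy _ _).symm
  have hQdeg : Q.natDegree ≤ m := by
    rw [hQ]
    exact natDegree_le_of_degree_le
      ((Lagrange.degree_interpolate_le _ hy.injOn).trans (by simp))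
  have hnode : ∀ l ≤ m + 1, lam (n + l) ∈ Icc (lam n) (lam (n + (m + 1 : ℕ))) := fun l hl =>
    ⟨hlam.monotone (by omega), hlam.monotone (by omega)⟩
  have hinterp := norm_sub_eval_le_of_eq_at_nodes hF hQdeg
    (t := fun i : Fin (m + 1) => lam (n + (i : ℕ))) (fun i j hij => hlam (by simpa using hij))
    (fun i => hnode i i.is_lt.le)
    (fun i => by
      rw [hval, hQ, Lagrange.eval_interpolate_at_node _ hy.injOn (mem_range.2 i.is_lt)])
    (fun u hu w hw => norm_sub_le_integral_norm_of_eq_integral hFG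
      (hGloc.integrableOn_isCompact isCompact_Icc) hu hw) hx
  have hnewton := Lagrange.norm_eval_sum_C_mul_nodal_le (fun j => ddiv lam f n j) y (m + 1)
    (z := (x : ℂ)) (D := lam (n + (m + 1 : ℕ)) - lam n) fun l hl => by
      rw [← Complex.ofReal_sub, Complex.norm_real, Real.norm_eq_abs, abs_le]
      have := hnode l hl.le
      constructor <;> linarith [hx.1, hx.2, this.1, this.2]
  calc ‖F x‖ ≤ ‖Q.eval (x : ℂ)‖ + ‖F x - Q.eval (x : ℂ)‖ := norm_le_insert' _ _
    _ ≤ _ := add_le_add hnewton (hinterp.trans_eq (mul_comm _ _))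

theorem GoodSeq.iUnion_Ico_eq_univ {lam : ℤ → ℝ} (hlam : GoodSeq lam) :
    ⋃ n : ℤ, Ico (lam n) (lam (n + 1)) = univ := by
  obtain ⟨-, hbot, htop⟩ := hlam
  refine eq_univ_of_forall fun x => mem_iUnion.2 ?_
  obtain ⟨N, hN⟩ := Filter.eventually_atTop.1 (htop.eventually_gt_atTop x)
  obtain ⟨N', hN'⟩ := Filter.eventually_atBot.1 (hbot.eventually_le_atBot x)
  obtain ⟨n, hn, hmax⟩ := Int.exists_greatest_of_bdd (P := fun n => lam n ≤ x)
    ⟨N, fun z hz => not_lt.1 fun h => (hN z h.le).not_ge hz⟩ ⟨N', hN' N' le_rfl⟩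
  exact ⟨n, hn, lt_of_not_ge fun h => (hmax (n + 1) h).not_gt (lt_add_one n)⟩

theorem Monotone.pairwise_disjoint_on_Ico_add_one {β : Type*} [Preorder β] {lam : ℤ → β}
    (hlam : Monotone lam) :
    Pairwise (Function.onFun Disjoint fun n : ℤ => Ico (lam n) (lam (n + 1))) := by
  simpa only [Order.succ_eq_add_one] using hlam.pairwise_disjoint_on_Ico_succ

theorem GoodSeq.lintegral_eq_tsum_Ico_s15 {lam : ℤ → ℝ} (hlam : GoodSeq lam) (g : ℝ → ℝ≥0∞) :
    ∫⁻ t, g t = ∑' n : ℤ, ∫⁻ t in Ico (lam n) (lam (n + 1)), g t := by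
  rw [← lintegral_iUnion (fun _ => measurableSet_Ico)
    hlam.1.monotone.pairwise_disjoint_on_Ico_add_one, hlam.iUnion_Ico_eq_univ,
    Measure.restrict_univ]

theorem Monotone.lintegral_Icc_le_sum_Ico {lam : ℤ → ℝ} (hlam : Monotone lam) (g : ℝ → ℝ≥0∞)
    (n : ℤ) (k : ℕ) :
    ∫⁻ t in Icc (lam n) (lam (n + k)), g t ≤
      ∑ i ∈ range k, ∫⁻ t in Ico (lam (n + i)) (lam (n + i + 1)), g t := by
  have hdisj : ((range k : Finset ℕ) : Set ℕ).PairwiseDisjoint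
      fun i => Ico (lam (n + i)) (lam (n + i + 1)) :=
    fun i _ j _ hij => hlam.pairwise_disjoint_on_Ico_add_one (by omega)
  rw [Measure.restrict_congr_set Ico_ae_eq_Icc.symm,
    ← lintegral_biUnion_finset hdisj (fun _ _ => measurableSet_Ico)]
  exact lintegral_mono_set (by
    simpa [add_assoc] using Ico_subset_biUnion_Ico k fun i : ℕ => lam (n + i))

theorem GoodSeq.tsum_lintegral_Icc_le {lam : ℤ → ℝ} (hlam : GoodSeq lam) (g : ℝ → ℝ≥0∞)
    (k : ℕ) :
    ∑' n : ℤ, ∫⁻ t in Icc (lam n) (lam (n + k)), g t ≤ k * ∫⁻ t, g t := by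
  calc ∑' n : ℤ, ∫⁻ t in Icc (lam n) (lam (n + k)), g t
      ≤ ∑' n : ℤ, ∑ i ∈ range k, ∫⁻ t in Ico (lam (n + i)) (lam (n + i + 1)), g t :=
        ENNReal.tsum_le_tsum fun n => hlam.1.monotone.lintegral_Icc_le_sum_Ico g n k
    _ = ∑ i ∈ range k, ∑' n : ℤ, ∫⁻ t in Ico (lam (n + i)) (lam (n + i + 1)), g t :=
        Summable.tsum_finsetSum fun _ _ => ENNReal.summable
    _ = ∑ _i ∈ range k, ∫⁻ t, g t := sum_congr rfl fun i _ =>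
        ((Equiv.addRight (i : ℤ)).tsum_eq fun n => ∫⁻ t in Ico (lam n) (lam (n + 1)), g t).trans
          (hlam.lintegral_eq_tsum_Ico_s15 g).symm
    _ = k * ∫⁻ t, g t := by rw [sum_const, card_range, nsmul_eq_mul]

theorem ofReal_intervalIntegral_norm_rpow_le {E : Type*} [NormedAddCommGroup E] {G : ℝ → E}
    {a b p : ℝ} (hp : 1 ≤ p) (hab : a ≤ b) (hG : IntegrableOn G (Icc a b)) :
    ENNReal.ofReal ((∫ t in a..b, ‖G t‖) ^ p) ≤
      ENNReal.ofReal (b - a) ^ (p - 1) * ∫⁻ t in Icc a b, ENNReal.ofReal (‖G t‖ ^ p) := by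
  have hp0 : 0 < p := one_pos.trans_le hp
  have hL1 : ENNReal.ofReal (∫ t in a..b, ‖G t‖) = ∫⁻ t in Icc a b, ‖G t‖ₑ := by
    rw [intervalIntegral.integral_of_le hab, ← integral_Icc_eq_integral_Ioc,
      ofReal_integral_norm_eq_lintegral_enorm hG]
  have hLp : ∫⁻ t in Icc a b, ENNReal.ofReal (‖G t‖ ^ p) = ∫⁻ t in Icc a b, ‖G t‖ₑ ^ p :=
    lintegral_congr fun t => by
      rw [← ofReal_norm, ENNReal.ofReal_rpow_of_nonneg (norm_nonneg _) hp0.le]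
  have holder := eLpNorm'_le_eLpNorm'_mul_rpow_measure_univ one_pos hp
    (μ := volume.restrict (Icc a b)) hG.aestronglyMeasurable
  simp only [eLpNorm'_eq_lintegral_enorm, ENNReal.rpow_one, div_one, Measure.restrict_apply_univ,
    Real.volume_Icc] at holder
  rw [← ENNReal.ofReal_rpow_of_nonneg
    (intervalIntegral.integral_nonneg hab fun _ _ => norm_nonneg _) hp0.le, hL1, hLp]
  calc (∫⁻ t in Icc a b, ‖G t‖ₑ) ^ p
      ≤ ((∫⁻ t in Icc a b, ‖G t‖ₑ ^ p) ^ (1 / p) * ENNReal.ofReal (b - a) ^ (1 - 1 / p)) ^ p :=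
        ENNReal.rpow_le_rpow holder hp0.le
    _ = ENNReal.ofReal (b - a) ^ (p - 1) * ∫⁻ t in Icc a b, ‖G t‖ₑ ^ p := by
        rw [ENNReal.mul_rpow_of_nonneg _ _ hp0.le, ← ENNReal.rpow_mul, ← ENNReal.rpow_mul,
          one_div_mul_cancel hp0.ne', ENNReal.rpow_one, mul_comm]
        congr 2
        field_simp

theorem rpow_sum_add_le_mul_sum_rpow_add {ι : Type*} (s : Finset ι) {a : ι → ℝ} {b p : ℝ}
    (ha : ∀ i ∈ s, 0 ≤ a i) (hb : 0 ≤ b) (hp : 1 ≤ p) :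
    (∑ i ∈ s, a i + b) ^ p ≤ ((#s : ℝ) + 1) ^ (p - 1) * (∑ i ∈ s, a i ^ p + b ^ p) := by
  have := Real.rpow_sum_le_const_mul_sum_rpow_of_nonneg (s := s.insertNone)
    (f := fun o => o.elim b a) hp (by rintro (_ | i) hi <;> simp_all)
  simpa [sum_insertNone, add_comm] using this

theorem mul_rpow_mul_pow_le {Δ h c p : ℝ} (hh : 0 < h) (hΔh : Δ ≤ h) (hc : 0 ≤ c) (k : ℕ) :
    Δ * (c * h ^ k) ^ p ≤ h ^ ((k : ℝ) * p + 1) * c ^ p := by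
  rw [Real.mul_rpow hc (by positivity), ← Real.rpow_natCast, ← Real.rpow_mul hh.le,
    Real.rpow_add hh, Real.rpow_one]
  have : 0 ≤ c ^ p * h ^ ((k : ℝ) * p) := by positivity
  nlinarith

theorem ofReal_mul_rpow_mul_pow_integral_le {E : Type*} [NormedAddCommGroup E] {G : ℝ → E}
    {a b Δ p : ℝ} (hp : 1 ≤ p) (hab : a < b) (hG : IntegrableOn G (Icc a b))
    (hΔh : Δ ≤ b - a) (k : ℕ) :
    ENNReal.ofReal (Δ * ((∫ t in a..b, ‖G t‖) * (b - a) ^ k) ^ p) ≤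
      ENNReal.ofReal ((b - a) ^ (((k + 1 : ℕ) : ℝ) * p)) *
        ∫⁻ t in Icc a b, ENNReal.ofReal (‖G t‖ ^ p) := by
  have hh : 0 < b - a := sub_pos.2 hab
  have hM : 0 ≤ ∫ t in a..b, ‖G t‖ :=
    intervalIntegral.integral_nonneg hab.le fun _ _ => norm_nonneg _
  calc ENNReal.ofReal (Δ * ((∫ t in a..b, ‖G t‖) * (b - a) ^ k) ^ p)
      ≤ ENNReal.ofReal ((b - a) ^ ((k : ℝ) * p + 1)) *
          ENNReal.ofReal ((∫ t in a..b, ‖G t‖) ^ p) := by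
        rw [← ENNReal.ofReal_mul (by positivity)]
        exact ENNReal.ofReal_le_ofReal (mul_rpow_mul_pow_le hh hΔh hM k)
    _ ≤ ENNReal.ofReal ((b - a) ^ ((k : ℝ) * p + 1)) *
          (ENNReal.ofReal (b - a) ^ (p - 1) * ∫⁻ t in Icc a b, ENNReal.ofReal (‖G t‖ ^ p)) := by
        gcongr
        exact ofReal_intervalIntegral_norm_rpow_le hp hab.le hG
    _ = _ := by
        rw [← mul_assoc, ENNReal.ofReal_rpow_of_pos hh, ← ENNReal.ofReal_mul (by positivity),
          ← Real.rpow_add hh]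
        congr 3
        push_cast
        ring

theorem AdmissibleExt.lintegral_Ico_rpow_norm_le {r : ℕ} (hr : 1 ≤ r) {p : ℝ} (hp : 1 ≤ p)
    {lam : ℤ → ℝ} (hlam : StrictMono lam) {f : ℤ → ℂ} {F G : ℝ → ℂ}
    (hadm : AdmissibleExt r lam f F G) (n : ℤ) :
    ∫⁻ t in Ico (lam n) (lam (n + 1)), ENNReal.ofReal (‖F t‖ ^ p) ≤
      ENNReal.ofReal (((r : ℝ) + 1) ^ (p - 1)) *
        (∑ j ∈ range r, ENNReal.ofReal
            ((lam (n + r) - lam n) ^ ((j : ℝ) * p + 1) * ‖ddiv lam f n j‖ ^ p) +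
          ENNReal.ofReal ((lam (n + r) - lam n) ^ ((r : ℝ) * p)) *
            ∫⁻ t in Icc (lam n) (lam (n + r)), ENNReal.ofReal (‖G t‖ ^ p)) := by
  set h := lam (n + r) - lam n
  set M := ∫ t in lam n..lam (n + r), ‖G t‖
  have hlt : lam n < lam (n + r) := hlam (by omega)
  have hΔ : 0 ≤ lam (n + 1) - lam n := sub_nonneg.2 (hlam.monotone (by omega))
  have hΔh : lam (n + 1) - lam n ≤ h := sub_le_sub_right (hlam.monotone (by omega)) _
  have hM : 0 ≤ M := intervalIntegral.integral_nonneg hlt.le fun _ _ => norm_nonneg _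
  set W := ∑ j ∈ range r, (‖ddiv lam f n j‖ * h ^ j) ^ p + (M * h ^ (r - 1)) ^ p
  have hW : 0 ≤ W := by positivity
  have hpt : ∀ t ∈ Ico (lam n) (lam (n + 1)), ‖F t‖ ^ p ≤ ((r : ℝ) + 1) ^ (p - 1) * W :=
    fun t ht => by
      have hbound := hadm.norm_le hr hlam n
        ⟨ht.1, ht.2.le.trans (hlam.monotone (by omega))⟩
      refine (Real.rpow_le_rpow (norm_nonneg _) hbound (by linarith)).trans ?_
      simpa using rpow_sum_add_le_mul_sum_rpow_add (range r) (fun j _ => by positivity)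
        (by positivity) hp
  have hG := hadm.2.1.integrableOn_isCompact (isCompact_Icc (a := lam n) (b := lam (n + r)))
  calc ∫⁻ t in Ico (lam n) (lam (n + 1)), ENNReal.ofReal (‖F t‖ ^ p)
      ≤ ENNReal.ofReal (((r : ℝ) + 1) ^ (p - 1) * W) * ENNReal.ofReal (lam (n + 1) - lam n) :=
        (setLIntegral_mono' measurableSet_Ico fun t ht =>
          ENNReal.ofReal_le_ofReal (hpt t ht)).trans_eq
            (by rw [setLIntegral_const, Real.volume_Ico])
    _ = ENNReal.ofReal (((r : ℝ) + 1) ^ (p - 1)) *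
          (∑ j ∈ range r,
              ENNReal.ofReal ((lam (n + 1) - lam n) * (‖ddiv lam f n j‖ * h ^ j) ^ p) +
            ENNReal.ofReal ((lam (n + 1) - lam n) * (M * h ^ (r - 1)) ^ p)) := by
        rw [← ENNReal.ofReal_mul (by positivity), mul_assoc, ENNReal.ofReal_mul (by positivity),
          ← ENNReal.ofReal_sum_of_nonneg (fun _ _ => by positivity),
          ← ENNReal.ofReal_add (sum_nonneg fun _ _ => by positivity) (by positivity),
          ← mul_sum, ← mul_add, mul_comm (lam (n + 1) - lam n)]
    _ ≤ _ := by
        refine mul_le_mul_right (add_le_add (sum_le_sum fun j _ => ?_) ?_) _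
        · exact ENNReal.ofReal_le_ofReal
            (mul_rpow_mul_pow_le (sub_pos.2 hlt) hΔh (norm_nonneg _) j)
        · simpa only [Nat.sub_add_cancel hr] using
            ofReal_mul_rpow_mul_pow_integral_le hp hlt hG hΔh (r - 1)

theorem sub_le_mul_of_forall_sub_le {lam : ℤ → ℝ} {K : ℝ}
    (hstep : ∀ n, lam (n + 1) - lam n ≤ K) (n : ℤ) (k : ℕ) : lam (n + k) - lam n ≤ k * K := by
  induction k with
  | zero => simp
  | succ k ih =>
    have := hstep (n + k)
    push_cast
    rw [← add_assoc]
    linarith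

theorem AdmissibleExt.lintegral_rpow_norm_le {r : ℕ} (hr : 1 ≤ r) {p : ℝ} (hp : 1 ≤ p)
    {lam : ℤ → ℝ} (hlam : GoodSeq lam) {H : ℝ} (hH : ∀ n, lam (n + r) - lam n ≤ H)
    {f : ℤ → ℂ} {F G : ℝ → ℂ} (hadm : AdmissibleExt r lam f F G) :
    ∫⁻ t, ENNReal.ofReal (‖F t‖ ^ p) ≤
      ENNReal.ofReal (((r : ℝ) + 1) ^ (p - 1)) * (eqWp r p lam f +
        ENNReal.ofReal (H ^ ((r : ℝ) * p)) * (r * ∫⁻ t, ENNReal.ofReal (‖G t‖ ^ p))) := by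
  set W := fun n : ℤ => ∑ j ∈ range r,
    ENNReal.ofReal ((lam (n + r) - lam n) ^ ((j : ℝ) * p + 1) * ‖ddiv lam f n j‖ ^ p)
  set J := fun n : ℤ => ∫⁻ t in Icc (lam n) (lam (n + r)), ENNReal.ofReal (‖G t‖ ^ p)
  have hW : ∑' n, W n ≤ eqWp r p lam f := by
    rw [Summable.tsum_finsetSum fun _ _ => ENNReal.summable]
    exact le_add_self
  have hIco : ∀ n, ∫⁻ t in Ico (lam n) (lam (n + 1)), ENNReal.ofReal (‖F t‖ ^ p) ≤
      ENNReal.ofReal (((r : ℝ) + 1) ^ (p - 1)) *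
        (W n + ENNReal.ofReal (H ^ ((r : ℝ) * p)) * J n) :=
    fun n => (hadm.lintegral_Ico_rpow_norm_le hr hp hlam.1 n).trans <| by
      have hh : 0 ≤ lam (n + r) - lam n := sub_nonneg.2 (hlam.1.monotone (by omega))
      gcongr
      exact hH n
  calc ∫⁻ t, ENNReal.ofReal (‖F t‖ ^ p)
      = ∑' n : ℤ, ∫⁻ t in Ico (lam n) (lam (n + 1)), ENNReal.ofReal (‖F t‖ ^ p) :=
        hlam.lintegral_eq_tsum_Ico_s15 _
    _ ≤ ∑' n : ℤ, ENNReal.ofReal (((r : ℝ) + 1) ^ (p - 1)) *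
          (W n + ENNReal.ofReal (H ^ ((r : ℝ) * p)) * J n) := ENNReal.tsum_le_tsum hIco
    _ = ENNReal.ofReal (((r : ℝ) + 1) ^ (p - 1)) *
          (∑' n, W n + ENNReal.ofReal (H ^ ((r : ℝ) * p)) * ∑' n, J n) := by
        rw [ENNReal.tsum_mul_left, ENNReal.tsum_add, ENNReal.tsum_mul_left]
    _ ≤ _ := by
        gcongr
        exact hlam.tsum_lintegral_Icc_le _ r

theorem stmt15_general (r : ℕ) (hr : 1 ≤ r) (K : ℝ) :
    ∃ C₁ : ℝ, 0 < C₁ ∧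
      ∀ p : ℝ, 1 ≤ p → ∀ lam : ℤ → ℝ, GoodSeq lam →
        (∀ n : ℤ, lam (n + 1) - lam n ≤ K) →
        ∀ f : ℤ → ℂ, ∀ F G : ℝ → ℂ, AdmissibleExt r lam f F G →
        (∫⁻ t, ENNReal.ofReal (‖F t‖ ^ p)) ≤
          ENNReal.ofReal (C₁ ^ p) *
            ((∫⁻ t, ENNReal.ofReal (‖G t‖ ^ p)) + eqWp r p lam f) := by
  set H := max 1 ((r : ℝ) * K)
  have hH : 1 ≤ H := le_max_left _ _
  refine ⟨(r + 1) * H ^ r, by positivity, fun p hp lam hlam hstep f F G hadm => ?_⟩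
  set c := ((r : ℝ) + 1) ^ (p - 1)
  set Y := H ^ ((r : ℝ) * p)
  have hc : 0 < c := by positivity
  have hY : 1 ≤ Y := Real.one_le_rpow hH (by positivity)
  have hC : ((r + 1) * H ^ r) ^ p = c * (r + 1) * Y := by
    simp only [c, Y]
    rw [Real.mul_rpow (by positivity) (by positivity), ← Real.rpow_natCast,
      ← Real.rpow_mul (by positivity), Real.rpow_sub_one (by positivity)]
    field_simp
  calc ∫⁻ t, ENNReal.ofReal (‖F t‖ ^ p)
      ≤ ENNReal.ofReal c * (eqWp r p lam f +
          ENNReal.ofReal Y * (r * ∫⁻ t, ENNReal.ofReal (‖G t‖ ^ p))) :=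
        hadm.lintegral_rpow_norm_le hr hp hlam
          fun n => (sub_le_mul_of_forall_sub_le hstep n r).trans (le_max_right 1 _)
    _ = ENNReal.ofReal (c * r * Y) * (∫⁻ t, ENNReal.ofReal (‖G t‖ ^ p)) +
          ENNReal.ofReal c * eqWp r p lam f := by
        rw [ENNReal.ofReal_mul (by positivity), ENNReal.ofReal_mul hc.le, ENNReal.ofReal_natCast]
        ring
    _ ≤ ENNReal.ofReal (((r + 1) * H ^ r) ^ p) * (∫⁻ t, ENNReal.ofReal (‖G t‖ ^ p)) +
          ENNReal.ofReal (((r + 1) * H ^ r) ^ p) * eqWp r p lam f := by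
        rw [hC]
        gcongr ENNReal.ofReal ?_ * _ + ENNReal.ofReal ?_ * _
        · nlinarith [mul_pos hc (one_pos.trans_le hY)]
        · nlinarith [mul_le_mul_of_nonneg_left hY hc.le]
    _ = _ := (mul_add _ _ _).symm

/-- for `r ≥ 1`, `K > 0` there is `C₁ > 0` depending only on `r, K` such that
for every `1 ≤ p < ∞`, every sequence with steps bounded by `K`, and every admissible
`r`-extension `F` (with `r`-th derivative `G`) of `f`,
`∫_ℝ |F|^p ≤ C₁^p [ ∫_ℝ |F^{(r)}|^p + ‖f‖_{eq,W}^p ]`. -/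
theorem stmt15 (r : ℕ) (hr : 1 ≤ r) (K : ℝ) (hK : 0 < K) :
    ∃ C₁ : ℝ, 0 < C₁ ∧
      ∀ p : ℝ, 1 ≤ p → ∀ lam : ℤ → ℝ, GoodSeq lam →
        (∀ n : ℤ, lam (n + 1) - lam n ≤ K) →
        ∀ f : ℤ → ℂ, ∀ F G : ℝ → ℂ, AdmissibleExt r lam f F G →
        (∫⁻ t, ENNReal.ofReal (‖F t‖ ^ p)) ≤
          ENNReal.ofReal (C₁ ^ p) *
            ((∫⁻ t, ENNReal.ofReal (‖G t‖ ^ p)) + eqWp r p lam f) :=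
  stmt15_general r hr K
end
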